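/- arXiv:1612.08146 — 7 statements merged into one kernel-verified Lean document; each statement's English description precedes it below -/
import Mathlib

section
/- For every integer k ≥ 1, the Motzkin number M_{7^k - 2} is congruent to 0 modulo 7. -/
/-!
Let `Λ f = ∑ₙ f_{pn} Xⁿ` be the Cartier operator on `𝔽_p⟦X⟧`; since `g ^ p = g(Xᵖ)` there,
`Λ (g ^ p * f) = g * Λ f`. The Catalan recursion gives `M = 1 + X M + X² M²` for the Motzkin
series, so `H = 1 - X - 2X²M` satisfies `H² = d := 1 - 2X - 3X²` and `[X^{n+2}] H = -2 Mₙ`.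

Let `p = 2m + 1` and `u = H⁻¹`. From `u² d = 1` we get `u = uᵖ dᵐ`, hence
`Λ (u P) = u Λ (dᵐ P)`. When `P` has degree at most one, `dᵐ P` has degree at most `p`, with
constant term `P(0)` and `Xᵖ`-coefficient `(-3)ᵐ P'(0)`; so if `(-3)ᵐ = 1` then `Λ (u P) = u P`.
Also `H = uᵖ dᵐ⁺¹`, so `Λ H = u Λ (dᵐ⁺¹)` is again of the form `u P`, and therefore
`[X^{pᵏ}] H = [X¹] Λᵏ H = [X¹] Λ H = [Xᵖ] H`: `M_{pᵏ-2} ≡ M_{p-2} (mod p)`. For `p = 7`,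
`(-3)³ = -27 ≡ 1` and `M₅ = 21`.
-/

open Finset

def motzkin (n : ℕ) : ℕ := ∑ k ∈ Finset.range (n + 1), n.choose (2 * k) * catalan k

open PowerSeries

theorem Nat.sum_antidiagonal_choose_mul_choose (n a b : ℕ) :
    ∑ x ∈ antidiagonal n, x.1.choose a * x.2.choose b = (n + 1).choose (a + b + 1) := by
  induction n generalizing b with
  | zero =>
    cases a <;> cases b <;> simp <;> exact (Nat.choose_eq_zero_of_lt (by omega)).symm
  | succ n ih =>
    rw [Finset.Nat.sum_antidiagonal_succ']
    cases b with
    | zero =>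
      have h := ih 0
      simp only [Nat.choose_zero_right, mul_one, add_zero] at h ⊢
      rw [h, Nat.choose_succ_succ' (n + 1) a, add_comm]
    | succ b =>
      simp only [Nat.choose_succ_succ' _ b, mul_add, sum_add_distrib, ih, Nat.choose_zero_succ,
        mul_zero, zero_add]
      rw [show a + (b + 1) + 1 = a + b + 1 + 1 by ring, Nat.choose_succ_succ' (n + 1)]

theorem Finset.sum_range_sum_range_eq_sum_range_sum_antidiagonal {M : Type*} [AddCommMonoid M]
    (N : ℕ) (g : ℕ → ℕ → M) (hg : ∀ a b, N ≤ a + b → g a b = 0) :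
    ∑ a ∈ range N, ∑ b ∈ range N, g a b =
      ∑ m ∈ range N, ∑ x ∈ antidiagonal m, g x.1 x.2 := by
  simp_rw [Finset.Nat.sum_antidiagonal_eq_sum_range_succ g, sum_range_diag_flip]
  refine sum_congr rfl fun a _ => (sum_subset (range_subset_range.2 (Nat.sub_le N a)) ?_).symm
  intro b _ hb
  exact hg a b (by simp only [mem_range] at hb; omega)

theorem motzkin_eq_sum_range_of_lt {n N : ℕ} (h : n < N) :
    motzkin n = ∑ k ∈ range N, n.choose (2 * k) * catalan k := by
  refine sum_subset (range_subset_range.2 h) fun k _ hk => ?_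
  rw [Nat.choose_eq_zero_of_lt (by simp only [mem_range] at hk; omega), zero_mul]

theorem motzkin_succ (n : ℕ) :
    motzkin (n + 1) =
      motzkin n + ∑ k ∈ range (n + 1), n.choose (2 * k + 1) * catalan (k + 1) := by
  rw [motzkin_eq_sum_range_of_lt (N := n + 2) (by omega),
    motzkin_eq_sum_range_of_lt (N := n + 2) (by omega), sum_range_succ' _ (n + 1),
    sum_range_succ' (fun k => n.choose (2 * k) * catalan k) (n + 1)]
  simp only [mul_add_one, Nat.choose_succ_succ', add_mul, sum_add_distrib, mul_zero,
    Nat.choose_zero_right, add_assoc, Nat.reduceAdd]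
  ring

theorem sum_antidiagonal_motzkin_mul_motzkin (n : ℕ) :
    ∑ x ∈ antidiagonal n, motzkin x.1 * motzkin x.2
      = ∑ k ∈ range (n + 2), (n + 1).choose (2 * k + 1) * catalan (k + 1) := by
  calc ∑ x ∈ antidiagonal n, motzkin x.1 * motzkin x.2
      = ∑ x ∈ antidiagonal n, (∑ a ∈ range (n + 2), x.1.choose (2 * a) * catalan a) *
          ∑ b ∈ range (n + 2), x.2.choose (2 * b) * catalan b := by
        refine sum_congr rfl fun x hx => ?_
        have := mem_antidiagonal.1 hx
        rw [motzkin_eq_sum_range_of_lt (N := n + 2) (by omega),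
          motzkin_eq_sum_range_of_lt (N := n + 2) (by omega)]
    _ = ∑ a ∈ range (n + 2), ∑ b ∈ range (n + 2),
          catalan a * catalan b * (n + 1).choose (2 * a + 2 * b + 1) := by
        simp_rw [sum_mul_sum, ← Nat.sum_antidiagonal_choose_mul_choose, mul_sum]
        rw [sum_comm]
        refine sum_congr rfl fun a _ => ?_
        rw [sum_comm]
        refine sum_congr rfl fun b _ => sum_congr rfl fun x _ => by ring
    _ = ∑ k ∈ range (n + 2), ∑ x ∈ antidiagonal k,
          catalan x.1 * catalan x.2 * (n + 1).choose (2 * x.1 + 2 * x.2 + 1) :=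
        sum_range_sum_range_eq_sum_range_sum_antidiagonal _ _ fun a b h => by
          rw [Nat.choose_eq_zero_of_lt (by omega), mul_zero]
    _ = _ := by
        refine sum_congr rfl fun k _ => ?_
        rw [catalan_succ', mul_sum]
        refine sum_congr rfl fun x hx => ?_
        rw [← mem_antidiagonal.1 hx, mul_add, mul_comm]

theorem motzkin_succ_succ (n : ℕ) :
    motzkin (n + 2) = motzkin (n + 1) + ∑ x ∈ antidiagonal n, motzkin x.1 * motzkin x.2 := by
  rw [motzkin_succ, sum_antidiagonal_motzkin_mul_motzkin]

namespace PowerSeries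

variable {R : Type*}

noncomputable def cartier [Semiring R] (p : ℕ) (f : R⟦X⟧) : R⟦X⟧ :=
  mk fun n => coeff (p * n) f

section Semiring
variable [Semiring R] {p : ℕ}

@[simp]
theorem coeff_cartier (f : R⟦X⟧) (n : ℕ) : coeff n (cartier p f) = coeff (p * n) f :=
  coeff_mk _ _

theorem coeff_cartier_iterate (f : R⟦X⟧) (k n : ℕ) :
    coeff n ((cartier p)^[k] f) = coeff (p ^ k * n) f := by
  induction k generalizing n with
  | zero => simp
  | succ k ih => rw [Function.iterate_succ_apply', coeff_cartier, ih, pow_succ, mul_assoc]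

theorem cartier_coe_of_natDegree_lt (Q : Polynomial R) (hQ : Q.natDegree < 2 * p) :
    cartier p (Q : R⟦X⟧) =
      ((Polynomial.C (Q.coeff p) * Polynomial.X + Polynomial.C (Q.coeff 0) : Polynomial R) :
        R⟦X⟧) := by
  ext n
  rw [coeff_cartier, Polynomial.coeff_coe, Polynomial.coeff_coe]
  rcases n with _ | _ | n
  · simp
  · simp
  · rw [Polynomial.coeff_eq_zero_of_natDegree_lt (by nlinarith)]
    simp

end Semiring

theorem cartier_expand_mul [CommRing R] {p : ℕ} (hp : p ≠ 0) (g f : R⟦X⟧) :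
    cartier p (expand p hp g * f) = g * cartier p f := by
  ext n
  let scale : ℕ × ℕ → ℕ × ℕ := fun x => (p * x.1, p * x.2)
  have hinj : Set.InjOn scale ↑(antidiagonal n) := fun x _ y _ h => by
    simp only [scale, Prod.mk.injEq, mul_right_inj' hp] at h
    exact Prod.ext h.1 h.2
  have hsub : (antidiagonal n).image scale ⊆ antidiagonal (p * n) := by
    simp only [subset_iff, mem_image, HasAntidiagonal.mem_antidiagonal, scale]
    rintro _ ⟨x, hx, rfl⟩
    rw [← mul_add, hx]
  have hzero : ∀ x ∈ antidiagonal (p * n), x ∉ (antidiagonal n).image scale →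
      coeff x.1 (expand p hp g) * coeff x.2 f = 0 := by
    rintro ⟨i, j⟩ hij hx
    rw [coeff_expand_of_not_dvd p hp g, zero_mul]
    rintro ⟨a, rfl⟩
    rw [HasAntidiagonal.mem_antidiagonal] at hij
    dsimp only at hij
    have ha : a ≤ n :=
      Nat.le_of_mul_le_mul_left (hij ▸ Nat.le_add_right _ _) (Nat.pos_of_ne_zero hp)
    have hj : j = p * (n - a) := by rw [Nat.mul_sub]; omega
    exact hx (mem_image.2 ⟨(a, n - a), HasAntidiagonal.mem_antidiagonal.2 (by omega),
      by simp [scale, hj]⟩)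
  rw [coeff_cartier, coeff_mul, coeff_mul, ← sum_subset hsub hzero, sum_image hinj]
  simp [scale]

theorem expand_zmod {p : ℕ} [Fact p.Prime] (f : (ZMod p)⟦X⟧) :
    expand p (Fact.out : p.Prime).ne_zero f = f ^ p := by
  have := MvPowerSeries.map_frobenius_expand p (Fact.out : p.Prime).ne_zero (f := f)
  rwa [ZMod.frobenius_zmod, MvPowerSeries.map_id] at this

theorem cartier_pow_mul {p : ℕ} [Fact p.Prime] (g f : (ZMod p)⟦X⟧) :
    cartier p (g ^ p * f) = g * cartier p f := by
  rw [← expand_zmod, cartier_expand_mul]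

theorem cartier_coe_pow_mul [CommSemiring R] {m : ℕ} {d P : Polynomial R}
    (hd : d.natDegree ≤ 2) (hd0 : d.coeff 0 = 1) (hd2 : d.coeff 2 ^ m = 1)
    (hP : P.natDegree ≤ 1) : cartier (2 * m + 1) ((d ^ m * P : Polynomial R) : R⟦X⟧) = P := by
  have hdm : (d ^ m).natDegree ≤ m * 2 := Polynomial.natDegree_pow_le_of_le m hd
  have hdeg : (d ^ m * P).natDegree < 2 * (2 * m + 1) := by
    have := Polynomial.natDegree_mul_le_of_le hdm hP
    omega
  rw [cartier_coe_of_natDegree_lt _ hdeg, Polynomial.mul_coeff_zero,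
    Polynomial.coeff_zero_eq_eval_zero, Polynomial.eval_pow, ← Polynomial.coeff_zero_eq_eval_zero,
    hd0, one_pow, one_mul, show 2 * m + 1 = m * 2 + 1 by ring,
    Polynomial.coeff_mul_add_eq_of_natDegree_le hdm hP, Polynomial.coeff_pow_of_natDegree_le hd,
    hd2, one_mul, ← Polynomial.eq_X_add_C_of_natDegree_le_one hP]

section SquareRoot

variable {p m : ℕ} [Fact p.Prime] {d : Polynomial (ZMod p)}

theorem cartier_mul_coe_eq_self (hpm : p = 2 * m + 1) (hd : d.natDegree ≤ 2)
    (hd0 : d.coeff 0 = 1) (hd2 : d.coeff 2 ^ m = 1) {u : (ZMod p)⟦X⟧} (hu : u ^ 2 * d = 1)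
    {P : Polynomial (ZMod p)} (hP : P.natDegree ≤ 1) :
    cartier p (u * (P : (ZMod p)⟦X⟧)) = u * P := by
  subst hpm
  have h : u * P = u ^ (2 * m + 1) * ((d ^ m * P : Polynomial (ZMod (2 * m + 1))) : _) := by
    rw [Polynomial.coe_mul, Polynomial.coe_pow]
    calc u * P = (u ^ 2 * d) ^ m * (u * P) := by rw [hu, one_pow, one_mul]
      _ = _ := by ring
  rw [congrArg (cartier _) h, cartier_pow_mul, cartier_coe_pow_mul hd hd0 hd2 hP]

theorem coeff_prime_pow_eq_of_sq_eq (hpm : p = 2 * m + 1) (hd : d.natDegree ≤ 2)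
    (hd0 : d.coeff 0 = 1) (hd2 : d.coeff 2 ^ m = 1) {H : (ZMod p)⟦X⟧} (hH : H ^ 2 = d)
    (k : ℕ) : coeff (p ^ (k + 1)) H = coeff p H := by
  subst hpm
  have hm : 1 ≤ m := by
    have := (Fact.out : (2 * m + 1).Prime).two_le
    omega
  have hHu : H * H⁻¹ = 1 := by
    refine PowerSeries.mul_inv_cancel H fun h0 => ?_
    have := congrArg constantCoeff hH
    rw [map_pow, h0, Polynomial.constantCoeff_coe, hd0] at this
    simp at this
  have hu : H⁻¹ ^ 2 * d = 1 := by rw [← hH, ← mul_pow, mul_comm H⁻¹, hHu, one_pow]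
  obtain ⟨P, hP, hcartier⟩ : ∃ P : Polynomial (ZMod (2 * m + 1)),
      P.natDegree ≤ 1 ∧ cartier (2 * m + 1) H = H⁻¹ * P := by
    have hH' : H = H⁻¹ ^ (2 * m + 1) * ((d ^ (m + 1) : Polynomial _) : _) := by
      calc H = (H * H⁻¹) ^ (2 * m + 1) * H := by rw [hHu, one_pow, one_mul]
        _ = _ := by rw [Polynomial.coe_pow, ← hH]; ring
    have hdeg : (d ^ (m + 1)).natDegree < 2 * (2 * m + 1) := by
      have := Polynomial.natDegree_pow_le_of_le (m + 1) hd
      omega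
    rw [congrArg (cartier _) hH', cartier_pow_mul, cartier_coe_of_natDegree_lt _ hdeg]
    exact ⟨_, Polynomial.natDegree_linear_le, rfl⟩
  have hiter : ∀ j, (cartier (2 * m + 1))^[j + 1] H = cartier (2 * m + 1) H := by
    intro j
    induction j with
    | zero => rfl
    | succ j ih =>
      rw [Function.iterate_succ_apply', ih, hcartier, cartier_mul_coe_eq_self rfl hd hd0 hd2 hu hP]
  rw [← mul_one ((2 * m + 1) ^ (k + 1)), ← coeff_cartier_iterate, hiter, coeff_cartier, mul_one]

end SquareRoot

end PowerSeries

noncomputable def motzkinSeries (R : Type*) [Semiring R] : R⟦X⟧ := mk fun n => (motzkin n : R)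

@[simp]
theorem coeff_motzkinSeries (R : Type*) [Semiring R] (n : ℕ) :
    coeff n (motzkinSeries R) = motzkin n :=
  coeff_mk _ _

theorem motzkinSeries_eq (R : Type*) [CommSemiring R] :
    motzkinSeries R = 1 + X * motzkinSeries R + X ^ 2 * motzkinSeries R ^ 2 := by
  ext n
  rcases n with _ | _ | n
  · simp [motzkin]
  · simp [motzkin, sum_range_succ, coeff_X_pow_mul']
  · rw [map_add, map_add, coeff_one, if_neg (by omega), zero_add, coeff_succ_X_mul,
      coeff_X_pow_mul', if_pos (by omega), sq, coeff_mul]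
    simp [motzkin_succ_succ]

noncomputable def motzkinSqrt (R : Type*) [CommRing R] : R⟦X⟧ :=
  1 - X - 2 * X ^ 2 * motzkinSeries R

theorem motzkinSqrt_sq (R : Type*) [CommRing R] : motzkinSqrt R ^ 2 = 1 - 2 * X - 3 * X ^ 2 := by
  rw [motzkinSqrt]
  linear_combination (-4 * X ^ 2 : R⟦X⟧) * motzkinSeries_eq R

theorem coeff_motzkinSqrt (R : Type*) [CommRing R] (n : ℕ) :
    coeff (n + 2) (motzkinSqrt R) = -(2 * motzkin n) := by
  rw [motzkinSqrt, ← map_ofNat C 2, mul_assoc, map_sub, map_sub, coeff_C_mul, coeff_X_pow_mul,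
    coeff_motzkinSeries, coeff_one, coeff_X, if_neg (by omega), if_neg (by omega)]
  ring

theorem motzkin_prime_pow_sub_two {p m : ℕ} [Fact p.Prime] (hpm : p = 2 * m + 1)
    (h3 : (-3 : ZMod p) ^ m = 1) (k : ℕ) :
    (motzkin (p ^ (k + 1) - 2) : ZMod p) = motzkin (p - 2) := by
  let d : Polynomial (ZMod p) := 1 - 2 * Polynomial.X - 3 * Polynomial.X ^ 2
  have hd : d.natDegree ≤ 2 := by simp only [d]; compute_degree
  have hd0 : d.coeff 0 = 1 := by simp [d]
  have hd2 : d.coeff 2 ^ m = 1 := by simpa [d, Polynomial.coeff_X, Polynomial.coeff_one] using h3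
  have hH : motzkinSqrt (ZMod p) ^ 2 = d := by
    rw [motzkinSqrt_sq, ← Polynomial.coeToPowerSeries.ringHom_apply]
    simp only [d, map_sub, map_mul, map_pow, map_one, map_ofNat,
      Polynomial.coeToPowerSeries.ringHom_apply, Polynomial.coe_X]
  have hp2 : 2 ≤ p := (Fact.out : p.Prime).two_le
  have h1 := coeff_motzkinSqrt (ZMod p) (p ^ (k + 1) - 2)
  have h2 := coeff_motzkinSqrt (ZMod p) (p - 2)
  rw [Nat.sub_add_cancel (hp2.trans (Nat.le_self_pow k.succ_ne_zero p))] at h1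
  rw [Nat.sub_add_cancel hp2] at h2
  have hcoeff := coeff_prime_pow_eq_of_sq_eq hpm hd hd0 hd2 hH k
  rw [h1, h2, neg_inj] at hcoeff
  exact mul_left_cancel₀ (Ring.two_ne_zero (by rw [ZMod.ringChar_zmod_n]; omega)) hcoeff

theorem motzkin_7k_sub_two_mod_seven (k : ℕ) (hk : 1 ≤ k) :
    motzkin (7 ^ k - 2) % 7 = 0 := by
  have h3 : (-3 : ZMod 7) ^ 3 = 1 := by decide
  have : Fact (Nat.Prime 7) := ⟨by norm_num⟩
  obtain ⟨k, rfl⟩ := Nat.exists_eq_add_of_le' hk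
  have h := motzkin_prime_pow_sub_two rfl h3 k
  have h5 : motzkin (7 - 2) = 21 := by
    simp [motzkin, sum_range_succ, catalan_two, catalan_three, Nat.choose]
  rw [h5] at h
  exact Nat.mod_eq_zero_of_dvd ((ZMod.natCast_eq_zero_iff _ 7).1 (h.trans rfl))
end

section
/- For every integer k ≥ 1, the Motzkin number M_{7^k - 1} is congruent to 2 modulo 7. -/
open Finset

/-!
Counting the factors of `(1 + X + X²)ⁿ` that contribute `1` or `X²` gives
`Mₙ = [Xⁿ] (1 + X + X²)ⁿ - [Xⁿ⁺²] (1 + X + X²)ⁿ`, by the ballot-type identity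
`C(2k, k) - C(2k, k + 1) = Cat_k`. In characteristic `p` and for `N = pᵏ`, Frobenius gives
`(1 + X + X²)ᴺ = 1 + Xᴺ + X²ᴺ`, so `(1 + X + X²)ᴺ⁻¹ = (1 + Xᴺ + X²ᴺ) / (1 + X + X²)`, whose
coefficients are read off from `1 / (1 + X + X²) = (1 - X) / (1 - X³)`, periodic `1, -1, 0, …`.
When `N ≡ 1 (mod 3)` the two coefficients are `1` and `-1`.
-/

theorem catalan_add_choose_succ (k : ℕ) :
    catalan k + (2 * k).choose (k + 1) = (2 * k).choose k := by
  have hsucc := Nat.choose_succ_right_eq (2 * k) k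
  have hcat := succ_mul_catalan_eq_centralBinom k
  rw [Nat.centralBinom_eq_two_mul_choose] at hcat
  rw [show 2 * k - k = k by omega] at hsucc
  apply Nat.eq_of_mul_eq_mul_left k.succ_pos
  nlinarith

section PowerSeries

open PowerSeries

def invOneAddXAddXSq (R : Type*) [Ring R] : R⟦X⟧ :=
  mk fun m => if m % 3 = 0 then 1 else if m % 3 = 1 then -1 else 0

theorem invOneAddXAddXSq_mul (R : Type*) [Ring R] : invOneAddXAddXSq R * (1 + X + X ^ 2) = 1 := by
  ext m
  rw [mul_add, mul_add, mul_one, map_add, map_add, coeff_mul_X_pow', coeff_one]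
  rcases m with _ | _ | m
  · simp [invOneAddXAddXSq]
  · simp [invOneAddXAddXSq]
  · simp only [coeff_succ_mul_X, invOneAddXAddXSq, coeff_mk]
    obtain h | h | h : m % 3 = 0 ∨ m % 3 = 1 ∨ m % 3 = 2 := by omega
    all_goals simp [h, Nat.add_mod]

end PowerSeries

open Polynomial

theorem coeff_one_add_X_sq_pow (j i : ℕ) :
    ((1 + X ^ 2 : ℕ[X]) ^ j).coeff i = if 2 ∣ i then j.choose (i / 2) else 0 := by
  rw [show (1 + X ^ 2 : ℕ[X]) ^ j = expand ℕ 2 ((1 + X) ^ j) by simp, coeff_expand two_pos,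
    coeff_one_add_X_pow, Nat.cast_id]

theorem coeff_one_add_X_add_X_sq_pow (n d : ℕ) :
    ((1 + X + X ^ 2 : ℕ[X]) ^ n).coeff (n + 2 * d) =
      ∑ k ∈ range (n + 1), n.choose (2 * k) * (2 * k).choose (k + d) := by
  have hterm : ∀ m ∈ range (n + 1),
      ((1 + X ^ 2 : ℕ[X]) ^ m * X ^ (n - m) * (n.choose m : ℕ[X])).coeff (n + 2 * d) =
        if 2 ∣ m then n.choose m * m.choose (m / 2 + d) else 0 := by
    intro m hm
    rw [mem_range] at hm
    rw [coeff_mul_natCast, coeff_mul_X_pow', if_pos (by omega),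
      show n + 2 * d - (n - m) = m + 2 * d by omega, coeff_one_add_X_sq_pow]
    by_cases hm2 : 2 ∣ m
    · rw [if_pos (by omega), if_pos hm2, show (m + 2 * d) / 2 = m / 2 + d by omega, mul_comm,
        Nat.cast_id]
    · rw [if_neg (by omega), if_neg hm2, zero_mul]
  rw [show (1 + X + X ^ 2 : ℕ[X]) = (1 + X ^ 2) + X by ring, add_pow, finsetSum_coeff,
    sum_congr rfl hterm]
  symm
  refine sum_bij_ne_zero (fun k _ _ => 2 * k) (fun k _ hk => ?_) (fun _ _ _ _ _ _ h => by omega)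
    (fun m _ hm => ⟨m / 2, ?_⟩) (fun k _ _ => by simp)
  · rw [mem_range]
    by_contra! hlt
    exact hk (by rw [Nat.choose_eq_zero_of_lt (by omega), zero_mul])
  · have hm2 : 2 ∣ m := by
      by_contra h
      exact hm (if_neg h)
    rw [if_pos hm2] at hm
    rw [Nat.mul_div_cancel' hm2]
    exact ⟨by simp only [mem_range] at *; omega, hm, rfl⟩

theorem motzkin_add_coeff_one_add_X_add_X_sq_pow (n : ℕ) :
    motzkin n + ((1 + X + X ^ 2 : ℕ[X]) ^ n).coeff (n + 2) =
      ((1 + X + X ^ 2 : ℕ[X]) ^ n).coeff n := by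
  have h₀ := coeff_one_add_X_add_X_sq_pow n 0
  have h₁ := coeff_one_add_X_add_X_sq_pow n 1
  rw [mul_zero, add_zero] at h₀
  rw [mul_one] at h₁
  rw [h₀, h₁, motzkin, ← sum_add_distrib]
  refine sum_congr rfl fun k _ => ?_
  rw [add_zero, ← mul_add, catalan_add_choose_succ]

theorem motzkin_cast_eq_coeff_sub (R : Type*) [CommRing R] (n : ℕ) :
    (motzkin n : R) =
      ((1 + X + X ^ 2 : R[X]) ^ n).coeff n - ((1 + X + X ^ 2 : R[X]) ^ n).coeff (n + 2) := by
  have hmap : (1 + X + X ^ 2 : R[X]) ^ n =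
      ((1 + X + X ^ 2 : ℕ[X]) ^ n).map (Nat.castRingHom R) := by
    simp
  rw [eq_sub_iff_add_eq, hmap, coeff_map, coeff_map, eq_natCast, eq_natCast, ← Nat.cast_add,
    motzkin_add_coeff_one_add_X_add_X_sq_pow]

theorem one_add_X_add_X_sq_pow_char_pow {R : Type*} [CommSemiring R] (p : ℕ) [Fact p.Prime]
    [CharP R p] (k : ℕ) :
    (1 + X + X ^ 2 : R[X]) ^ p ^ k = 1 + X ^ p ^ k + X ^ (2 * p ^ k) := by
  rw [add_pow_char_pow, add_pow_char_pow, one_pow, ← pow_mul, mul_comm]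

theorem coeff_sub_coeff_of_mul_one_add_X_add_X_sq {R : Type*} [CommRing R] {A : R[X]} {N : ℕ}
    (hN : 2 ≤ N) (hN3 : N % 3 = 1) (hA : A * (1 + X + X ^ 2) = 1 + X ^ N + X ^ (2 * N)) :
    A.coeff (N - 1) - A.coeff (N + 1) = 2 := by
  have hA' : (A : PowerSeries R) =
      (1 + PowerSeries.X ^ N + PowerSeries.X ^ (2 * N)) * invOneAddXAddXSq R := by
    have hA_coe := congrArg (fun P : R[X] => (P : PowerSeries R)) hA
    push_cast at hA_coe
    rw [← hA_coe, mul_assoc, mul_comm _ (invOneAddXAddXSq R), invOneAddXAddXSq_mul, mul_one]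
  simp only [← Polynomial.coeff_coe, hA', add_mul, one_mul, map_add,
    mul_comm (PowerSeries.X ^ _), PowerSeries.coeff_mul_X_pow', invOneAddXAddXSq,
    PowerSeries.coeff_mk]
  rw [if_pos (by omega : (N - 1) % 3 = 0), if_neg (by omega : ¬N ≤ N - 1),
    if_neg (by omega : ¬2 * N ≤ N - 1), if_neg (by omega : (N + 1) % 3 ≠ 0),
    if_neg (by omega : (N + 1) % 3 ≠ 1), if_pos (by omega : N ≤ N + 1), Nat.add_sub_cancel_left,
    if_neg (by omega : ¬2 * N ≤ N + 1)]
  norm_num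

theorem motzkin_prime_pow_sub_one_eq_two (R : Type*) [CommRing R] (p : ℕ) [Fact p.Prime]
    [CharP R p] {k : ℕ} (hk : k ≠ 0) (hk3 : p ^ k % 3 = 1) : (motzkin (p ^ k - 1) : R) = 2 := by
  have hN : 2 ≤ p ^ k := (Fact.out : p.Prime).two_le.trans (Nat.le_self_pow hk p)
  rw [motzkin_cast_eq_coeff_sub, show p ^ k - 1 + 2 = p ^ k + 1 by omega]
  refine coeff_sub_coeff_of_mul_one_add_X_add_X_sq hN hk3 ?_
  rw [← pow_succ, Nat.sub_add_cancel (by omega), one_add_X_add_X_sq_pow_char_pow]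

theorem motzkin_7k_sub_one_mod_seven (k : ℕ) (hk : 1 ≤ k) :
    motzkin (7 ^ k - 1) % 7 = 2 := by
  have : Fact (Nat.Prime 7) := ⟨by norm_num⟩
  have h := motzkin_prime_pow_sub_one_eq_two (ZMod 7) 7 (by omega : k ≠ 0)
    (by rw [Nat.pow_mod]; simp)
  rw [← ZMod.val_natCast, h]
  rfl
end

section
/- The Motzkin number M_n is even if and only if n = (4i + ε)·4^{j+1} − δ for some natural numbers i, j, some ε ∈ {1, 3}, and some δ ∈ {1, 2}. -/
/-!
Modulo 2 the Catalan recursion `C (n + 1) = ∑ C i * C (n - i)` collapses to its middle term, since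
the terms for `(i, j)` and `(j, i)` cancel; hence `C k` is odd exactly when `k + 1` is a power of
two. By Lucas's theorem `choose n (2 * k) ≡ choose (n / 2) k` and `choose b (2 ^ m - 1)` is odd iff
`2 ^ m ∣ b + 1`. So the odd terms of `M n` are those with `k = 2 ^ m - 1` and `2 ^ m ∣ n / 2 + 1`;
there are `v₂ (n / 2 + 1) + 1` of them, and `M n` is even iff this valuation is odd. Writing
`n / 2 + 1 = 2 ^ (2 * j + 1) * m` with `m` odd and `n + δ = 2 * (n / 2 + 1)` gives the stated form.
-/

open Finset

theorem CharTwo.sum_antidiagonal_mul {R : Type*} [CommSemiring R] [CharP R 2] (f : ℕ → R)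
    (n : ℕ) :
    ∑ ij ∈ antidiagonal n, f ij.1 * f ij.2 = if Even n then f (n / 2) ^ 2 else 0 := by
  have swap_cancel : ∀ s : Finset (ℕ × ℕ), (∀ ij ∈ s, ij.swap ∈ s) → (∀ ij ∈ s, ij.1 ≠ ij.2) →
      ∑ ij ∈ s, f ij.1 * f ij.2 = 0 := by
    intro s hswap hdiag
    refine sum_involution (fun ij _ => ij.swap) (fun ij _ => ?_) (fun ij hij _ h => ?_)
      (fun ij hij => hswap ij hij) (fun ij _ => ij.swap_swap)
    · rw [Prod.fst_swap, Prod.snd_swap, mul_comm, CharTwo.add_self_eq_zero]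
    · exact hdiag ij hij (congrArg Prod.fst h).symm
  split_ifs with hn
  · obtain ⟨c, rfl⟩ := hn
    have hmem : (c, c) ∈ antidiagonal (c + c) := HasAntidiagonal.mem_antidiagonal.mpr rfl
    rw [← add_sum_erase _ _ hmem, swap_cancel, add_zero, sq, show (c + c) / 2 = c by omega]
    · intro ij hij
      simp only [mem_erase, HasAntidiagonal.mem_antidiagonal, ne_eq, Prod.ext_iff,
        Prod.fst_swap, Prod.snd_swap] at hij ⊢
      omega
    · intro ij hij
      simp only [mem_erase, HasAntidiagonal.mem_antidiagonal, ne_eq, Prod.ext_iff] at hij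
      omega
  · refine swap_cancel _ (fun ij hij => ?_) (fun ij hij h => hn ⟨ij.1, ?_⟩)
    · simpa [add_comm] using hij
    · rw [HasAntidiagonal.mem_antidiagonal] at hij
      omega

namespace Nat

theorem isPowerOfTwo_add_two_iff (n : ℕ) :
    (n + 2).isPowerOfTwo ↔ Even n ∧ (n / 2 + 1).isPowerOfTwo := by
  constructor
  · rintro ⟨_ | m, hm⟩
    · omega
    · rw [pow_succ] at hm
      exact ⟨⟨n / 2, by omega⟩, m, by omega⟩
  · rintro ⟨⟨c, rfl⟩, m, hm⟩
    exact ⟨m + 1, by rw [pow_succ]; omega⟩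

/-- Lucas's theorem at `p = 2`, one binary digit at a time. -/
theorem odd_choose_iff (n k : ℕ) :
    Odd (n.choose k) ↔ Odd ((n % 2).choose (k % 2)) ∧ Odd ((n / 2).choose (k / 2)) := by
  rw [Nat.odd_iff, Choose.choose_modEq_choose_mod_mul_choose_div_nat, ← Nat.odd_iff, Nat.odd_mul]

theorem odd_choose_two_mul_iff (n k : ℕ) : Odd (n.choose (2 * k)) ↔ Odd ((n / 2).choose k) := by
  simp [odd_choose_iff n (2 * k)]

theorem odd_choose_two_pow_sub_one_iff (n m : ℕ) :
    Odd (n.choose (2 ^ m - 1)) ↔ 2 ^ m ∣ n + 1 := by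
  induction m generalizing n with
  | zero => simp
  | succ m ih =>
    have hpos := Nat.one_le_two_pow (n := m)
    rw [odd_choose_iff, show (2 ^ (m + 1) - 1) % 2 = 1 by omega,
      show (2 ^ (m + 1) - 1) / 2 = 2 ^ m - 1 by omega, Nat.choose_one_right, ih, pow_succ']
    rcases Nat.even_or_odd' n with ⟨c, rfl | rfl⟩
    · simp only [Nat.mul_mod_right, Nat.not_odd_zero, false_and, false_iff]
      exact fun h => by have := (dvd_mul_right 2 _).trans h; omega
    · rw [show (2 * c + 1) / 2 = c by omega, show 2 * c + 1 + 1 = 2 * (c + 1) by ring,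
        Nat.mul_dvd_mul_iff_left two_pos]
      simp

theorem odd_iff_exists_four_mul_add (m : ℕ) :
    Odd m ↔ ∃ i ε, (ε = 1 ∨ ε = 3) ∧ m = 4 * i + ε := by
  rw [Nat.odd_iff]
  constructor
  · exact fun h => ⟨m / 4, m % 4, by omega, by omega⟩
  · rintro ⟨i, ε, hε, rfl⟩
    omega

end Nat

theorem odd_catalan_succ_iff (n : ℕ) :
    Odd (catalan (n + 1)) ↔ Even n ∧ Odd (catalan (n / 2)) := by
  have h : (catalan (n + 1) : ZMod 2) = if Even n then (catalan (n / 2) : ZMod 2) else 0 := by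
    rw [catalan_succ', ← ZMod.pow_card (catalan (n / 2) : ZMod 2)]
    push_cast
    exact CharTwo.sum_antidiagonal_mul (fun k => (catalan k : ZMod 2)) n
  rw [← ZMod.natCast_eq_one_iff_odd, ← ZMod.natCast_eq_one_iff_odd, h]
  split_ifs <;> simp [*]

theorem odd_catalan_iff (n : ℕ) : Odd (catalan n) ↔ (n + 1).isPowerOfTwo := by
  induction n using Nat.strong_induction_on with
  | _ n ih =>
    rcases n with _ | n
    · simpa using Nat.isPowerOfTwo_one
    · rw [odd_catalan_succ_iff, ih (n / 2) (by omega), Nat.isPowerOfTwo_add_two_iff]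

theorem odd_choose_two_mul_mul_catalan_iff (n k : ℕ) :
    Odd (n.choose (2 * k) * catalan k) ↔ ∃ m, 2 ^ m ∣ n / 2 + 1 ∧ 2 ^ m - 1 = k := by
  rw [Nat.odd_mul, Nat.odd_choose_two_mul_iff, odd_catalan_iff]
  constructor
  · rintro ⟨hchoose, m, hm⟩
    rw [show k = 2 ^ m - 1 by omega, Nat.odd_choose_two_pow_sub_one_iff] at hchoose
    exact ⟨m, hchoose, by omega⟩
  · rintro ⟨m, hm, rfl⟩
    have := Nat.one_le_two_pow (n := m)
    exact ⟨(Nat.odd_choose_two_pow_sub_one_iff _ _).mpr hm, m, by omega⟩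

theorem even_motzkin_iff (n : ℕ) : Even (motzkin n) ↔ Odd (padicValNat 2 (n / 2 + 1)) := by
  have hodd_terms : {k ∈ range (n + 1) | Odd (n.choose (2 * k) * catalan k)} =
      (range (padicValNat 2 (n / 2 + 1) + 1)).image (fun m => 2 ^ m - 1) := by
    ext k
    simp only [mem_filter, mem_range, mem_image, odd_choose_two_mul_mul_catalan_iff,
      Nat.lt_succ_iff, ← padicValNat_dvd_iff_le (Nat.succ_ne_zero _)]
    refine ⟨fun ⟨_, h⟩ => h, fun ⟨m, hm, hk⟩ => ⟨?_, m, hm, hk⟩⟩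
    have := Nat.le_of_dvd (Nat.succ_pos _) hm
    omega
  have hinj : Function.Injective (fun m : ℕ => 2 ^ m - 1) := fun a b h => by
    have := Nat.one_le_two_pow (n := a)
    have := Nat.one_le_two_pow (n := b)
    exact Nat.pow_right_injective le_rfl (show 2 ^ a = 2 ^ b by dsimp only at h; omega)
  rw [motzkin, even_sum_iff_even_card_odd, hodd_terms, card_image_of_injective _ hinj, card_range,
    Nat.even_add_one, Nat.not_even_iff_odd]

theorem padicValNat_pow_mul_of_not_dvd {p : ℕ} [Fact p.Prime] {m : ℕ} (hm : ¬p ∣ m) (k : ℕ) :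
    padicValNat p (p ^ k * m) = k := by
  have hm0 : m ≠ 0 := by rintro rfl; exact hm (dvd_zero p)
  rw [padicValNat.mul (pow_ne_zero _ (Fact.out : p.Prime).ne_zero) hm0, padicValNat.prime_pow,
    padicValNat.eq_zero_of_not_dvd hm, add_zero]

theorem odd_padicValNat_two_iff {n : ℕ} (hn : n ≠ 0) :
    Odd (padicValNat 2 n) ↔ ∃ j m, Odd m ∧ n = 2 ^ (2 * j + 1) * m := by
  constructor
  · obtain ⟨k, m, hm, rfl⟩ := Nat.exists_eq_two_pow_mul_odd hn
    rintro ⟨j, hj⟩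
    rw [padicValNat_pow_mul_of_not_dvd hm.not_two_dvd_nat] at hj
    exact ⟨j, m, hm, by rw [hj]⟩
  · rintro ⟨j, m, hm, rfl⟩
    rw [padicValNat_pow_mul_of_not_dvd hm.not_two_dvd_nat]
    exact odd_two_mul_add_one j

theorem motzkin_even_iff (n : ℕ) :
    2 ∣ motzkin n ↔
      ∃ i j ε δ : ℕ, (ε = 1 ∨ ε = 3) ∧ (δ = 1 ∨ δ = 2) ∧
        n + δ = (4 * i + ε) * 4 ^ (j + 1) := by
  have hpow (j m : ℕ) : m * 4 ^ (j + 1) = 2 * (2 ^ (2 * j + 1) * m) := by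
    rw [show (4 : ℕ) = 2 ^ 2 by norm_num, ← pow_mul]; ring
  rw [← even_iff_two_dvd, even_motzkin_iff, odd_padicValNat_two_iff (Nat.succ_ne_zero _)]
  constructor
  · rintro ⟨j, m, hm, hn⟩
    obtain ⟨i, ε, hε, rfl⟩ := (Nat.odd_iff_exists_four_mul_add m).mp hm
    refine ⟨i, j, ε, 2 - n % 2, hε, by omega, ?_⟩
    rw [hpow]
    omega
  · rintro ⟨i, j, ε, δ, hε, hδ, hn⟩
    refine ⟨j, 4 * i + ε, (Nat.odd_iff_exists_four_mul_add _).mpr ⟨i, ε, hε, rfl⟩, ?_⟩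
    rw [hpow] at hn
    omega
end

section
/- Let T(01) be the set of natural numbers whose base-3 representation contains only the digits 0 and 1. Then M_n ≡ −1 (mod 3) if n ∈ 3·T(01) − 1; M_n ≡ 1 (mod 3) if n ∈ 3·T(01) or n ∈ 3·T(01) − 2; and M_n ≡ 0 (mod 3) otherwise. -/
open Finset

def T01 : Set ℕ := {m : ℕ | ∀ d ∈ Nat.digits 3 m, d = 0 ∨ d = 1}

lemma hockey (m s : ℕ) : ∑ j ∈ range m, j.choose s = m.choose (s+1) := by
  induction m with
  | zero => simp
  | succ m ih => rw [sum_range_succ, ih, Nat.choose_succ_succ]; ring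

lemma vander (m : ℕ) : ∀ r s : ℕ,
    ∑ i ∈ range (m+1), (i.choose r) * ((m - i).choose s) = (m+1).choose (r+s+1) := by
  induction m with
  | zero =>
    intro r s
    rcases r with _ | r
    · rcases s with _ | s
      · simp
      · simp [Nat.choose_eq_zero_of_lt (by omega : 1 < s + 1 + 1)]
    · simp [Nat.choose_eq_zero_of_lt (by omega : 1 < r + 1 + s + 1)]
  | succ m ih =>
    intro r s
    rw [sum_range_succ']
    simp only [Nat.add_sub_add_right]
    rcases r with _ | r
    · simp only [Nat.choose_zero_right, one_mul]
      have hrefl : (∑ i ∈ range (m+1), ((m - i).choose s)) = ∑ i ∈ range (m+1), (i.choose s) := by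
        have := Finset.sum_range_reflect (fun i => i.choose s) (m+1)
        simpa using this
      rw [hrefl, hockey (m+1) s]
      simp only [Nat.sub_zero, Nat.zero_add, Nat.choose_succ_succ (m+1) s]
      ring
    · have hsplit : ∀ i, (i+1).choose (r+1) = i.choose r + i.choose (r+1) :=
        fun i => Nat.choose_succ_succ i r
      simp only [hsplit, add_mul, Finset.sum_add_distrib]
      rw [ih r s, ih (r+1) s]
      have : (m+1+1).choose (r+1+s+1) = (m+1).choose (r+s+1) + (m+1).choose (r+1+s+1) := by
        rw [show r+1+s+1 = (r+s+1)+1 by ring, Nat.choose_succ_succ]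
      rw [this]
      simp [Nat.choose_eq_zero_of_lt (by omega : 0 < r + 1)]

lemma motzkin_eq_sum {n N : ℕ} (h : n + 1 ≤ N) :
    motzkin n = ∑ k ∈ range N, n.choose (2*k) * catalan k := by
  unfold motzkin
  apply Finset.sum_subset (Finset.range_subset_range.2 h)
  intro k hk hk'
  simp only [mem_range] at hk hk'
  rw [Nat.choose_eq_zero_of_lt (by omega), zero_mul]

lemma motzkin_rec (n : ℕ) :
    motzkin (n+1) = motzkin n + ∑ i ∈ range n, motzkin i * motzkin (n-1-i) := by
  have step1 : motzkin (n+1) = motzkin n + ∑ k ∈ range (n+1), n.choose (2*k+1) * catalan (k+1) := by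
    unfold motzkin
    rw [sum_range_succ' (fun k => (n+1).choose (2*k) * catalan k) (n+1)]
    have h1 : ∀ k, (n+1).choose (2*(k+1)) = n.choose (2*k+1) + n.choose (2*k+2) := by
      intro k
      rw [show 2*(k+1) = (2*k+1)+1 by ring, Nat.choose_succ_succ]
    simp only [h1, add_mul, Finset.sum_add_distrib]
    rw [sum_range_succ' (fun k => n.choose (2*k) * catalan k) n]
    have h2 : ∀ k, n.choose (2*(k+1)) = n.choose (2*k+2) := fun k => by ring_nf
    simp only [h2]
    have h3 : ∑ k ∈ range (n+1), n.choose (2*k+2) * catalan (k+1)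
        = ∑ k ∈ range n, n.choose (2*k+2) * catalan (k+1) := by
      rw [sum_range_succ, Nat.choose_eq_zero_of_lt (by omega), zero_mul, add_zero]
    rw [h3]
    simp only [Nat.mul_zero, Nat.choose_zero_right, one_mul]
    ring
  rw [step1]
  congr 1
  rcases n with _ | m
  · simp [motzkin]
  -- n = m+1
  have key : ∀ k ∈ range (m+2), (m+1).choose (2*k+1) * catalan (k+1)
      = ∑ a ∈ range (k+1), catalan a * catalan (k-a) * (m+1).choose (2*k+1) := by
    intro k _
    rw [catalan_succ' k, Nat.sum_antidiagonal_eq_sum_range_succ (fun x y => catalan x * catalan y) k,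
      Finset.mul_sum]
    apply Finset.sum_congr rfl; intro a _; ring
  rw [Finset.sum_congr rfl key]
  -- triangle sum: ∑_{k<m+2} ∑_{a≤k} g a (k-a) where g a b = cat a * cat b * C(m+1, 2(a+b)+1)
  have flip := Finset.sum_range_diag_flip (m+2)
    (fun a b => catalan a * catalan b * (m+1).choose (2*(a+b)+1))
  have tri : ∑ k ∈ range (m+2), ∑ a ∈ range (k+1),
      catalan a * catalan (k-a) * (m+1).choose (2*k+1)
      = ∑ a ∈ range (m+2), ∑ b ∈ range (m+2-a),
        catalan a * catalan b * (m+1).choose (2*(a+b)+1) := by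
    rw [← flip]
    apply Finset.sum_congr rfl; intro k hk
    apply Finset.sum_congr rfl; intro a ha
    simp only [mem_range] at hk ha
    congr 2
    omega
  rw [tri]
  -- extend inner ranges to m+2
  have inner : ∀ a ∈ range (m+2), (∑ b ∈ range (m+2-a),
      catalan a * catalan b * (m+1).choose (2*(a+b)+1))
      = ∑ b ∈ range (m+2), catalan a * catalan b * (m+1).choose (2*(a+b)+1) := by
    intro a _
    apply Finset.sum_subset (Finset.range_subset_range.2 (by omega))
    intro b hb hb'
    simp only [mem_range] at hb hb'
    rw [Nat.choose_eq_zero_of_lt (by omega), mul_zero]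
  rw [Finset.sum_congr rfl inner]
  -- now RHS: ∑_{i<m+1} motzkin i * motzkin (m-i), expand motzkin via motzkin_eq_sum N = m+2
  have expand : ∀ i ∈ range (m+1), motzkin i * motzkin (m+1-1-i)
      = ∑ a ∈ range (m+2), ∑ b ∈ range (m+2),
          (i.choose (2*a) * catalan a) * ((m-i).choose (2*b) * catalan b) := by
    intro i hi
    simp only [mem_range] at hi
    rw [show m+1-1-i = m-i by omega, motzkin_eq_sum (show i+1 ≤ m+2 by omega),
      motzkin_eq_sum (show (m-i)+1 ≤ m+2 by omega), Finset.sum_mul_sum]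
  rw [Finset.sum_congr rfl expand]
  -- swap orders so that i is innermost
  have swap2 : ∀ a ∈ range (m+2), ∑ i ∈ range (m+1), ∑ b ∈ range (m+2),
        (i.choose (2*a) * catalan a) * ((m-i).choose (2*b) * catalan b)
      = ∑ b ∈ range (m+2), catalan a * catalan b * (m+1).choose (2*(a+b)+1) := by
    intro a _
    rw [Finset.sum_comm]
    apply Finset.sum_congr rfl
    intro b _
    have : ∑ i ∈ range (m+1), (i.choose (2*a) * catalan a) * ((m-i).choose (2*b) * catalan b)
        = catalan a * catalan b * ∑ i ∈ range (m+1), i.choose (2*a) * (m-i).choose (2*b) := by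
      rw [Finset.mul_sum]; apply Finset.sum_congr rfl; intro i _; ring
    rw [this, vander m (2*a) (2*b), show 2*a+(2*b)+1 = 2*(a+b)+1 by ring]
  have final : (∑ i ∈ range (m+1), ∑ a ∈ range (m+2), ∑ b ∈ range (m+2),
        (i.choose (2*a) * catalan a) * ((m-i).choose (2*b) * catalan b))
      = ∑ a ∈ range (m+2), ∑ b ∈ range (m+2),
          catalan a * catalan b * (m+1).choose (2*(a+b)+1) := by
    rw [Finset.sum_comm]
    exact Finset.sum_congr rfl swap2
  rw [final]


noncomputable def chi (m : ℕ) : ZMod 3 :=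
  if (∀ d ∈ Nat.digits 3 m, d = 0 ∨ d = 1) then 1 else 0

lemma chi_zero : chi 0 = 1 := by simp [chi]

lemma chi_one : chi 1 = 1 := by simp [chi]

lemma chi_mem {q : ℕ} (h : q ∈ T01) : chi q = 1 := by
  unfold chi
  rw [if_pos (by exact h)]

lemma chi_not_mem {q : ℕ} (h : q ∉ T01) : chi q = 0 := by
  unfold chi
  rw [if_neg (by exact h)]

lemma chi_threeMul (q : ℕ) : chi (3*q) = chi q := by
  rcases Nat.eq_zero_or_pos q with h | h
  · subst h; rfl
  unfold chi
  rw [Nat.digits_def' (by norm_num) (by omega)]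
  have h1 : 3*q % 3 = 0 := by omega
  have h2 : 3*q / 3 = q := by omega
  rw [h1, h2]
  simp

lemma chi_threeMul_add_one (q : ℕ) : chi (3*q+1) = chi q := by
  unfold chi
  rw [Nat.digits_def' (by norm_num) (by omega)]
  have h1 : (3*q+1) % 3 = 1 := by omega
  have h2 : (3*q+1) / 3 = q := by omega
  rw [h1, h2]
  simp

lemma chi_threeMul_add_two (q : ℕ) : chi (3*q+2) = 0 := by
  unfold chi
  rw [Nat.digits_def' (by norm_num) (by omega)]
  have h1 : (3*q+2) % 3 = 2 := by omega
  have h2 : (3*q+2) / 3 = q := by omega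
  rw [h1, h2, if_neg]
  intro h
  rcases h 2 (by simp) with h' | h' <;> omega


lemma sum_range_triple (g : ℕ → ZMod 3) (L : ℕ) :
    ∑ a ∈ range (3*L), g a = ∑ a ∈ range L, (g (3*a) + g (3*a+1) + g (3*a+2)) := by
  induction L with
  | zero => simp
  | succ L ih =>
    rw [show 3*(L+1) = 3*L+1+1+1 by ring, sum_range_succ, sum_range_succ, sum_range_succ, ih,
      sum_range_succ]
    ring

noncomputable def q2 (M : ℕ) : ZMod 3 := ∑ a ∈ range (M+1), chi a * chi (M - a)
noncomputable def h2 (M : ℕ) : ZMod 3 := ∑ a ∈ range (M+1), chi a * chi (M - a + 1)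
noncomputable def g2 (M : ℕ) : ZMod 3 := ∑ a ∈ range (M+1), chi (a+1) * chi (M - a + 1)

lemma q2_succ (M : ℕ) : q2 M = (∑ a ∈ range M, chi a * chi (M - a)) + chi M := by
  unfold q2
  rw [sum_range_succ, Nat.sub_self, chi_zero, mul_one]

lemma h2_succ' (M : ℕ) : h2 M = (∑ a ∈ range M, chi (a+1) * chi (M - a)) + chi (M+1) := by
  unfold h2
  rw [sum_range_succ' (fun a => chi a * chi (M - a + 1)) M, chi_zero, Nat.sub_zero, one_mul]
  congr 1
  apply Finset.sum_congr rfl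
  intro a ha
  simp only [mem_range] at ha
  rw [show M - (a+1) + 1 = M - a by omega]

lemma q2_0 (M : ℕ) : q2 (3*M) = q2 M := by
  show ∑ a ∈ range (3*M+1), chi a * chi (3*M - a) = q2 M
  rw [sum_range_succ, sum_range_triple]
  have e : ∀ a ∈ range M,
      (chi (3*a) * chi (3*M - 3*a) + chi (3*a+1) * chi (3*M - (3*a+1))
        + chi (3*a+2) * chi (3*M - (3*a+2))) = chi a * chi (M - a) := by
    intro a ha; simp only [mem_range] at ha
    rw [show 3*M - 3*a = 3*(M-a) by omega,
        show 3*M - (3*a+1) = 3*(M-a-1)+2 by omega,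
        show 3*M - (3*a+2) = 3*(M-a-1)+1 by omega]
    simp only [chi_threeMul, chi_threeMul_add_one, chi_threeMul_add_two]
    ring
  rw [Finset.sum_congr rfl e, Nat.sub_self, chi_threeMul, chi_zero, mul_one, q2_succ]

lemma q2_1 (M : ℕ) : q2 (3*M+1) = 2 * q2 M := by
  show ∑ a ∈ range (3*M+1+1), chi a * chi (3*M+1 - a) = 2 * q2 M
  rw [sum_range_succ, sum_range_succ, sum_range_triple]
  have e : ∀ a ∈ range M,
      (chi (3*a) * chi (3*M+1 - 3*a) + chi (3*a+1) * chi (3*M+1 - (3*a+1))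
        + chi (3*a+2) * chi (3*M+1 - (3*a+2))) = 2 * (chi a * chi (M - a)) := by
    intro a ha; simp only [mem_range] at ha
    rw [show 3*M+1 - 3*a = 3*(M-a)+1 by omega,
        show 3*M+1 - (3*a+1) = 3*(M-a) by omega,
        show 3*M+1 - (3*a+2) = 3*(M-a-1)+2 by omega]
    simp only [chi_threeMul, chi_threeMul_add_one, chi_threeMul_add_two]
    ring
  rw [Finset.sum_congr rfl e, show 3*M+1 - 3*M = 1 by omega,
    show 3*M+1 - (3*M+1) = 0 by omega, chi_threeMul, chi_threeMul_add_one, chi_zero, chi_one,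
    ← Finset.mul_sum, q2_succ]
  ring

lemma q2_2 (M : ℕ) : q2 (3*M+2) = q2 M := by
  show ∑ a ∈ range (3*M+2+1), chi a * chi (3*M+2 - a) = q2 M
  rw [show 3*M+2+1 = 3*(M+1) by ring, sum_range_triple]
  have e : ∀ a ∈ range (M+1),
      (chi (3*a) * chi (3*M+2 - 3*a) + chi (3*a+1) * chi (3*M+2 - (3*a+1))
        + chi (3*a+2) * chi (3*M+2 - (3*a+2))) = chi a * chi (M - a) := by
    intro a ha; simp only [mem_range] at ha
    rw [show 3*M+2 - 3*a = 3*(M-a)+2 by omega,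
        show 3*M+2 - (3*a+1) = 3*(M-a)+1 by omega,
        show 3*M+2 - (3*a+2) = 3*(M-a) by omega]
    simp only [chi_threeMul, chi_threeMul_add_one, chi_threeMul_add_two]
    ring
  rw [Finset.sum_congr rfl e]
  rfl

lemma h2_0 (M : ℕ) : h2 (3*M) = 2 * q2 M + 2 * chi M := by
  show ∑ a ∈ range (3*M+1), chi a * chi (3*M - a + 1) = 2 * q2 M + 2 * chi M
  rw [sum_range_succ, sum_range_triple]
  have e : ∀ a ∈ range M,
      (chi (3*a) * chi (3*M - 3*a + 1) + chi (3*a+1) * chi (3*M - (3*a+1) + 1)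
        + chi (3*a+2) * chi (3*M - (3*a+2) + 1)) = 2 * (chi a * chi (M - a)) := by
    intro a ha; simp only [mem_range] at ha
    rw [show 3*M - 3*a + 1 = 3*(M-a)+1 by omega,
        show 3*M - (3*a+1) + 1 = 3*(M-a) by omega,
        show 3*M - (3*a+2) + 1 = 3*(M-a-1)+2 by omega]
    simp only [chi_threeMul, chi_threeMul_add_one, chi_threeMul_add_two]
    ring
  rw [Finset.sum_congr rfl e, Nat.sub_self, chi_threeMul, chi_one, ← Finset.mul_sum, q2_succ]
  have h3 : (3:ZMod 3) = 0 := rfl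
  linear_combination (-(chi M)) * h3

lemma h2_1 (M : ℕ) : h2 (3*M+1) = q2 M := by
  show ∑ a ∈ range (3*M+1+1), chi a * chi (3*M+1 - a + 1) = q2 M
  rw [sum_range_succ, sum_range_succ, sum_range_triple]
  have e : ∀ a ∈ range M,
      (chi (3*a) * chi (3*M+1 - 3*a + 1) + chi (3*a+1) * chi (3*M+1 - (3*a+1) + 1)
        + chi (3*a+2) * chi (3*M+1 - (3*a+2) + 1)) = chi a * chi (M - a) := by
    intro a ha; simp only [mem_range] at ha
    rw [show 3*M+1 - 3*a + 1 = 3*(M-a)+2 by omega,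
        show 3*M+1 - (3*a+1) + 1 = 3*(M-a)+1 by omega,
        show 3*M+1 - (3*a+2) + 1 = 3*(M-a) by omega]
    simp only [chi_threeMul, chi_threeMul_add_one, chi_threeMul_add_two]
    ring
  rw [Finset.sum_congr rfl e, show 3*M+1 - 3*M + 1 = 2 by omega,
    show 3*M+1 - (3*M+1) + 1 = 1 by omega, chi_threeMul, chi_threeMul_add_one, chi_one,
    show (2:ℕ) = 3*0+2 by omega, chi_threeMul_add_two, q2_succ]
  ring

lemma h2_2 (M : ℕ) : h2 (3*M+2) = h2 M := by
  show ∑ a ∈ range (3*M+2+1), chi a * chi (3*M+2 - a + 1) = h2 M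
  rw [show 3*M+2+1 = 3*(M+1) by ring, sum_range_triple]
  have e : ∀ a ∈ range (M+1),
      (chi (3*a) * chi (3*M+2 - 3*a + 1) + chi (3*a+1) * chi (3*M+2 - (3*a+1) + 1)
        + chi (3*a+2) * chi (3*M+2 - (3*a+2) + 1)) = chi a * chi (M - a + 1) := by
    intro a ha; simp only [mem_range] at ha
    rw [show 3*M+2 - 3*a + 1 = 3*(M-a+1) by omega,
        show 3*M+2 - (3*a+1) + 1 = 3*(M-a)+2 by omega,
        show 3*M+2 - (3*a+2) + 1 = 3*(M-a)+1 by omega]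
    simp only [chi_threeMul, chi_threeMul_add_one, chi_threeMul_add_two]
    ring
  rw [Finset.sum_congr rfl e]
  rfl

lemma g2_0 (M : ℕ) : g2 (3*M) = q2 M := by
  show ∑ a ∈ range (3*M+1), chi (a+1) * chi (3*M - a + 1) = q2 M
  rw [sum_range_succ, sum_range_triple]
  have e : ∀ a ∈ range M,
      (chi (3*a+1) * chi (3*M - 3*a + 1) + chi (3*a+1+1) * chi (3*M - (3*a+1) + 1)
        + chi (3*a+2+1) * chi (3*M - (3*a+2) + 1)) = chi a * chi (M - a) := by
    intro a ha; simp only [mem_range] at ha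
    rw [show 3*a+1+1 = 3*a+2 by omega,
        show 3*a+2+1 = 3*(a+1) by omega,
        show 3*M - 3*a + 1 = 3*(M-a)+1 by omega,
        show 3*M - (3*a+1) + 1 = 3*(M-a) by omega,
        show 3*M - (3*a+2) + 1 = 3*(M-a-1)+2 by omega]
    simp only [chi_threeMul, chi_threeMul_add_one, chi_threeMul_add_two]
    ring
  rw [Finset.sum_congr rfl e, Nat.sub_self, chi_threeMul_add_one, chi_one, q2_succ, mul_one]

lemma g2_1 (M : ℕ) : g2 (3*M+1) = h2 M - chi (M+1) := by
  show ∑ a ∈ range (3*M+1+1), chi (a+1) * chi (3*M+1 - a + 1) = h2 M - chi (M+1)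
  rw [sum_range_succ, sum_range_succ, sum_range_triple]
  have e : ∀ a ∈ range M,
      (chi (3*a+1) * chi (3*M+1 - 3*a + 1) + chi (3*a+1+1) * chi (3*M+1 - (3*a+1) + 1)
        + chi (3*a+2+1) * chi (3*M+1 - (3*a+2) + 1)) = chi (a+1) * chi (M - a) := by
    intro a ha; simp only [mem_range] at ha
    rw [show 3*a+1+1 = 3*a+2 by omega,
        show 3*a+2+1 = 3*(a+1) by omega,
        show 3*M+1 - 3*a + 1 = 3*(M-a)+2 by omega,
        show 3*M+1 - (3*a+1) + 1 = 3*(M-a)+1 by omega,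
        show 3*M+1 - (3*a+2) + 1 = 3*(M-a) by omega]
    simp only [chi_threeMul, chi_threeMul_add_one, chi_threeMul_add_two]
    ring
  rw [Finset.sum_congr rfl e, show 3*M+1 - 3*M + 1 = 2 by omega,
    show 3*M+1 - (3*M+1) + 1 = 1 by omega, show 3*M+1+1 = 3*M+2 by omega,
    chi_threeMul_add_one, chi_threeMul_add_two, chi_one,
    show (2:ℕ) = 3*0+2 by omega, chi_threeMul_add_two, h2_succ']
  ring

lemma g2_2 (M : ℕ) : g2 (3*M+2) = 2 * h2 M := by
  show ∑ a ∈ range (3*M+2+1), chi (a+1) * chi (3*M+2 - a + 1) = 2 * h2 M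
  rw [show 3*M+2+1 = 3*(M+1) by ring, sum_range_triple]
  have e : ∀ a ∈ range (M+1),
      (chi (3*a+1) * chi (3*M+2 - 3*a + 1) + chi (3*a+1+1) * chi (3*M+2 - (3*a+1) + 1)
        + chi (3*a+2+1) * chi (3*M+2 - (3*a+2) + 1))
        = chi a * chi (M - a + 1) + chi (a+1) * chi (M - a) := by
    intro a ha; simp only [mem_range] at ha
    rw [show 3*a+1+1 = 3*a+2 by omega,
        show 3*a+2+1 = 3*(a+1) by omega,
        show 3*M+2 - 3*a + 1 = 3*(M-a+1) by omega,
        show 3*M+2 - (3*a+1) + 1 = 3*(M-a)+2 by omega,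
        show 3*M+2 - (3*a+2) + 1 = 3*(M-a)+1 by omega]
    simp only [chi_threeMul, chi_threeMul_add_one, chi_threeMul_add_two]
    ring
  rw [Finset.sum_congr rfl e, Finset.sum_add_distrib]
  have e2 : ∑ a ∈ range (M+1), chi (a+1) * chi (M - a)
      = (∑ a ∈ range M, chi (a+1) * chi (M - a)) + chi (M+1) := by
    rw [sum_range_succ, Nat.sub_self, chi_zero, mul_one]
  rw [e2, ← h2_succ']
  have e3 : ∑ a ∈ range (M+1), chi a * chi (M - a + 1) = h2 M := rfl
  rw [e3, h2_succ']
  ring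

lemma chi_two : chi 2 = 0 := by
  have := chi_threeMul_add_two 0
  simpa using this

lemma neg_one_pow_three (M : ℕ) : ((-1 : ZMod 3))^(3*M) = (-1)^M := by
  rw [pow_mul]
  norm_num

lemma master (M : ℕ) : q2 M = (-1)^M ∧ h2 M = -chi (M+1) - (-1)^M ∧ g2 M = chi (M+2) + (-1)^M := by
  induction M using Nat.strong_induction_on with
  | _ M ih =>
    have h3 : (3 : ZMod 3) = 0 := rfl
    rcases Nat.eq_zero_or_pos M with h0 | h0
    · subst h0
      refine ⟨?_, ?_, ?_⟩
      · show ∑ a ∈ range 1, chi a * chi (0 - a) = _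
        simp [chi_zero]
      · show ∑ a ∈ range 1, chi a * chi (0 - a + 1) = _
        simp [chi_zero, chi_one]
        decide
      · show ∑ a ∈ range 1, chi (a+1) * chi (0 - a + 1) = _
        simp [chi_one, chi_two]
    · obtain ⟨M', r, hr, hM⟩ : ∃ M' r, r < 3 ∧ M = 3*M' + r := ⟨M/3, M%3, by omega, by omega⟩
      have hlt : M' < M := by omega
      obtain ⟨Q, H, G⟩ := ih M' hlt
      interval_cases r
      · subst hM
        simp only [Nat.add_zero] at *
        refine ⟨?_, ?_, ?_⟩
        · rw [q2_0, Q, neg_one_pow_three]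
        · rw [h2_0, Q, chi_threeMul_add_one, neg_one_pow_three]
          linear_combination (chi M' + (-1:ZMod 3)^M') * h3
        · rw [g2_0, Q, chi_threeMul_add_two, neg_one_pow_three]
          ring
      · subst hM
        refine ⟨?_, ?_, ?_⟩
        · rw [q2_1, Q, pow_succ, neg_one_pow_three]
          linear_combination ((-1:ZMod 3)^M') * h3
        · rw [h2_1, Q, show 3*M'+1+1 = 3*M'+2 by ring, chi_threeMul_add_two, pow_succ,
            neg_one_pow_three]
          ring
        · rw [g2_1, H, show 3*M'+1+2 = 3*(M'+1) by ring, chi_threeMul, pow_succ,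
            neg_one_pow_three]
          linear_combination (-(chi (M'+1))) * h3
      · subst hM
        refine ⟨?_, ?_, ?_⟩
        · rw [q2_2, Q, pow_succ, pow_succ, neg_one_pow_three]
          ring
        · rw [h2_2, H, show 3*M'+2+1 = 3*(M'+1) by ring, chi_threeMul, pow_succ, pow_succ,
            neg_one_pow_three]
          ring
        · rw [g2_2, H, show 3*M'+2+2 = 3*(M'+1)+1 by ring, chi_threeMul_add_one, pow_succ,
            pow_succ, neg_one_pow_three]
          linear_combination (-(chi (M'+1)) - (-1:ZMod 3)^M') * h3

noncomputable def f (n : ℕ) : ZMod 3 :=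
  if n % 3 = 0 then chi (n/3) else if n % 3 = 1 then chi (n/3 + 1) else -chi (n/3 + 1)

lemma f_0 (q : ℕ) : f (3*q) = chi q := by
  have h1 : (3*q) % 3 = 0 := by omega
  have h2 : (3*q) / 3 = q := by omega
  simp [f, h1, h2]

lemma f_1 (q : ℕ) : f (3*q+1) = chi (q+1) := by
  have h1 : (3*q+1) % 3 = 1 := by omega
  have h2 : (3*q+1) / 3 = q := by omega
  simp [f, h1, h2]

lemma f_2 (q : ℕ) : f (3*q+2) = -chi (q+1) := by
  have h1 : (3*q+2) % 3 = 2 := by omega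
  have h2 : (3*q+2) / 3 = q := by omega
  simp [f, h1, h2]

lemma f_zero : f 0 = 1 := by
  have := f_0 0
  simpa [chi_zero] using this

lemma f_one : f 1 = 1 := by
  have := f_1 0
  simpa [chi_one] using this

noncomputable def fconv (m : ℕ) : ZMod 3 := ∑ i ∈ range (m+1), f i * f (m - i)

lemma hsum1 (M : ℕ) : ∑ a ∈ range M, chi a * chi (M - a + 1) = h2 M - chi M := by
  have := sum_range_succ (fun a => chi a * chi (M - a + 1)) M
  have h2d : h2 M = (∑ x ∈ range M, chi x * chi (M - x + 1)) + chi M * chi (M - M + 1) := this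
  rw [Nat.sub_self] at h2d
  rw [chi_one] at h2d
  rw [h2d]; ring

lemma hsum2 (M : ℕ) : ∑ a ∈ range (M+1), chi (a+1) * chi (M - a) = h2 M := by
  rw [sum_range_succ, Nat.sub_self, chi_zero, mul_one, h2_succ']

lemma fconv_0 (M : ℕ) : fconv (3*M) = chi (M+1) := by
  show ∑ i ∈ range (3*M+1), f i * f (3*M - i) = chi (M+1)
  rw [sum_range_succ, sum_range_triple]
  have e : ∀ a ∈ range M,
      (f (3*a) * f (3*M - 3*a) + f (3*a+1) * f (3*M - (3*a+1))
        + f (3*a+2) * f (3*M - (3*a+2)))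
        = chi a * chi (M - a) + chi (a+1) * chi (M - a) := by
    intro a ha; simp only [mem_range] at ha
    rw [show 3*M - 3*a = 3*(M-a) by omega,
        show 3*M - (3*a+1) = 3*(M-a-1)+2 by omega,
        show 3*M - (3*a+2) = 3*(M-a-1)+1 by omega,
        f_0, f_0, f_1, f_1, f_2, f_2,
        show M-a-1+1 = M-a by omega]
    have h3 : (3 : ZMod 3) = 0 := rfl
    linear_combination (-(chi (a+1) * chi (M-a))) * h3
  rw [Finset.sum_congr rfl e, Finset.sum_add_distrib, Nat.sub_self, f_0, f_zero, mul_one]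
  have s1 : ∑ a ∈ range M, chi a * chi (M - a) = q2 M - chi M := by
    rw [q2_succ]; ring
  have s2 : ∑ a ∈ range M, chi (a+1) * chi (M - a) = h2 M - chi (M+1) := by
    rw [h2_succ']; ring
  rw [s1, s2]
  obtain ⟨Q, H, G⟩ := master M
  rw [Q, H]
  have h3 : (3 : ZMod 3) = 0 := rfl
  linear_combination (-(chi (M+1))) * h3

lemma fconv_1 (M : ℕ) : fconv (3*M+1) = 2 * chi (M+1) := by
  show ∑ i ∈ range (3*M+1+1), f i * f (3*M+1 - i) = 2 * chi (M+1)
  rw [sum_range_succ, sum_range_succ, sum_range_triple]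
  have e : ∀ a ∈ range M,
      (f (3*a) * f (3*M+1 - 3*a) + f (3*a+1) * f (3*M+1 - (3*a+1))
        + f (3*a+2) * f (3*M+1 - (3*a+2)))
        = chi a * chi (M - a + 1) + 2 * (chi (a+1) * chi (M - a)) := by
    intro a ha; simp only [mem_range] at ha
    rw [show 3*M+1 - 3*a = 3*(M-a)+1 by omega,
        show 3*M+1 - (3*a+1) = 3*(M-a) by omega,
        show 3*M+1 - (3*a+2) = 3*(M-a-1)+2 by omega,
        f_0, f_0, f_1, f_1, f_2, f_2,
        show M-a-1+1 = M-a by omega]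
    ring
  rw [Finset.sum_congr rfl e, Finset.sum_add_distrib, show 3*M+1-3*M = 1 by omega,
    show 3*M+1-(3*M+1) = 0 by omega, f_0, f_one, f_zero, mul_one, mul_one,
    show 3*M+1 = 3*M+1 from rfl, f_1, hsum1, ← Finset.mul_sum,
    show (∑ a ∈ range M, chi (a+1) * chi (M-a)) = h2 M - chi (M+1) from by rw [h2_succ']; ring]
  obtain ⟨Q, H, G⟩ := master M
  rw [H]
  have h3 : (3 : ZMod 3) = 0 := rfl
  linear_combination (-(chi (M+1)) - (-1:ZMod 3)^M + chi (M+1) - 2*chi (M+1)) * h3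

lemma fconv_2 (M : ℕ) : fconv (3*M+2) = chi (M+2) - chi (M+1) := by
  show ∑ i ∈ range (3*M+2+1), f i * f (3*M+2 - i) = chi (M+2) - chi (M+1)
  rw [show 3*M+2+1 = 3*(M+1) by ring, sum_range_triple]
  have e : ∀ a ∈ range (M+1),
      (f (3*a) * f (3*M+2 - 3*a) + f (3*a+1) * f (3*M+2 - (3*a+1))
        + f (3*a+2) * f (3*M+2 - (3*a+2)))
        = -(chi a * chi (M - a + 1)) + chi (a+1) * chi (M - a + 1) - chi (a+1) * chi (M - a) := by
    intro a ha; simp only [mem_range] at ha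
    rw [show 3*M+2 - 3*a = 3*(M-a)+2 by omega,
        show 3*M+2 - (3*a+1) = 3*(M-a)+1 by omega,
        show 3*M+2 - (3*a+2) = 3*(M-a) by omega,
        f_0, f_0, f_1, f_1, f_2, f_2]
    ring
  rw [Finset.sum_congr rfl e]
  rw [show (∑ a ∈ range (M+1), (-(chi a * chi (M - a + 1)) + chi (a+1) * chi (M - a + 1)
      - chi (a+1) * chi (M - a)))
    = -(∑ a ∈ range (M+1), chi a * chi (M - a + 1))
      + (∑ a ∈ range (M+1), chi (a+1) * chi (M - a + 1))
      - (∑ a ∈ range (M+1), chi (a+1) * chi (M - a)) from by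
      simp only [sub_eq_add_neg, Finset.sum_add_distrib, ← Finset.sum_neg_distrib]]
  rw [hsum2]
  have eh : (∑ a ∈ range (M+1), chi a * chi (M - a + 1)) = h2 M := rfl
  have eg : (∑ a ∈ range (M+1), chi (a+1) * chi (M - a + 1)) = g2 M := rfl
  rw [eh, eg]
  obtain ⟨Q, H, G⟩ := master M
  rw [H, G]
  have h3 : (3 : ZMod 3) = 0 := rfl
  linear_combination (chi (M+1) + (-1:ZMod 3)^M) * h3

lemma f_rec (n : ℕ) : f (n+1) = f n + ∑ i ∈ range n, f i * f (n-1-i) := by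
  have h3 : (3 : ZMod 3) = 0 := rfl
  rcases Nat.eq_zero_or_pos n with h0 | h0
  · subst h0; simp [f_zero, f_one]
  have hconv : ∑ i ∈ range n, f i * f (n-1-i) = fconv (n-1) := by
    unfold fconv
    rw [show n - 1 + 1 = n by omega]
  rw [hconv]
  obtain ⟨q, r, hr, hn⟩ : ∃ q r, r < 3 ∧ n = 3*q + r + 1 := ⟨(n-1)/3, (n-1)%3, by omega, by omega⟩
  interval_cases r
  · -- n = 3q+1
    subst hn
    rw [show 3*q+0+1 = 3*q+1 by ring, show 3*q+1+1 = 3*q+2 by ring, show 3*q+1-1 = 3*q by omega,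
      f_2, f_1, fconv_0]
    linear_combination (-(chi (q+1))) * h3
  · -- n = 3q+2
    subst hn
    rw [show 3*q+1+1 = 3*q+2 by ring, show 3*q+2+1 = 3*(q+1) by ring,
      show 3*q+2-1 = 3*q+1 by omega, f_0, f_2, fconv_1]
    ring
  · -- n = 3q+3
    subst hn
    rw [show 3*q+2+1 = 3*(q+1) by ring, show 3*(q+1)+1 = 3*(q+1)+1 from rfl,
      show 3*(q+1)-1 = 3*q+2 by omega, f_1, f_0, fconv_2]
    ring

lemma motzkin_zero : motzkin 0 = 1 := by simp [motzkin]

lemma motzkin_cast (n : ℕ) : ((motzkin n : ZMod 3)) = f n := by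
  induction n using Nat.strong_induction_on with
  | _ n ih =>
    rcases n with _ | m
    · rw [motzkin_zero, f_zero]; norm_num
    · rw [motzkin_rec m]
      push_cast
      rw [ih m (by omega), f_rec]
      congr 1
      apply Finset.sum_congr rfl
      intro i hi
      simp only [mem_range] at hi
      rw [ih i (by omega), ih (m-1-i) (by omega)]


lemma mod3_of_cast {k v : ℕ} (hv : v < 3) (h : (k : ZMod 3) = (v : ZMod 3)) : k % 3 = v := by
  have h1 : k ≡ v [MOD 3] := (ZMod.natCast_eq_natCast_iff k v 3).1 h
  have h2 : k % 3 = v % 3 := h1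
  omega

theorem motzkin_mod_three (n : ℕ) :
    ((∃ t ∈ T01, n + 1 = 3 * t) → motzkin n % 3 = 2) ∧
    (((∃ t ∈ T01, n = 3 * t) ∨ (∃ t ∈ T01, n + 2 = 3 * t)) → motzkin n % 3 = 1) ∧
    ((¬ (∃ t ∈ T01, n + 1 = 3 * t) ∧ ¬ (∃ t ∈ T01, n = 3 * t) ∧
      ¬ (∃ t ∈ T01, n + 2 = 3 * t)) → motzkin n % 3 = 0) := by
  obtain ⟨q, r, hr, hn⟩ : ∃ q r, r < 3 ∧ n = 3*q + r := ⟨n/3, n%3, by omega, by omega⟩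
  subst hn
  interval_cases r
  · refine ⟨?_, ?_, ?_⟩
    · rintro ⟨t, ht, he⟩; omega
    · rintro (⟨t, ht, he⟩ | ⟨t, ht, he⟩)
      · have hq : q ∈ T01 := (show t = q by omega) ▸ ht
        apply mod3_of_cast (by omega)
        rw [motzkin_cast, show 3*q+0 = 3*q by ring, f_0, chi_mem hq]
        norm_num
      · omega
    · rintro ⟨h1, h2, h3⟩
      have hq : q ∉ T01 := fun hq => h2 ⟨q, hq, by ring⟩
      apply mod3_of_cast (by omega)
      rw [motzkin_cast, show 3*q+0 = 3*q by ring, f_0, chi_not_mem hq]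
      norm_num
  · refine ⟨?_, ?_, ?_⟩
    · rintro ⟨t, ht, he⟩; omega
    · rintro (⟨t, ht, he⟩ | ⟨t, ht, he⟩)
      · omega
      · have hq : q + 1 ∈ T01 := (show t = q + 1 by omega) ▸ ht
        apply mod3_of_cast (by omega)
        rw [motzkin_cast, f_1, chi_mem hq]
        norm_num
    · rintro ⟨h1, h2, h3⟩
      have hq : q + 1 ∉ T01 := fun hq => h3 ⟨q+1, hq, by ring⟩
      apply mod3_of_cast (by omega)
      rw [motzkin_cast, f_1, chi_not_mem hq]
      norm_num
  · refine ⟨?_, ?_, ?_⟩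
    · rintro ⟨t, ht, he⟩
      have hq : q + 1 ∈ T01 := (show t = q + 1 by omega) ▸ ht
      apply mod3_of_cast (by omega)
      rw [motzkin_cast, f_2, chi_mem hq]
      decide
    · rintro (⟨t, ht, he⟩ | ⟨t, ht, he⟩) <;> omega
    · rintro ⟨h1, h2, h3⟩
      have hq : q + 1 ∉ T01 := fun hq => h1 ⟨q+1, hq, by ring⟩
      apply mod3_of_cast (by omega)
      rw [motzkin_cast, f_2, chi_not_mem hq]
      norm_num
end

section
/- The Motzkin number M_n is divisible by 13 if and only if n has one of the forms (13i+1)·13^k − 2 or (13i+12)·13^k − 1, where i, k are natural numbers with k ≥ 1. -/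
/-!
Write `T(n, m)` for the coefficient of `X ^ m` in `(1 + X + X²) ^ n`, so that
`M_n = T(n, n) - T(n, n + 2)` (expand `((1 + X²) + X) ^ n` and use
`Cat_k = C(2k, k) - C(2k, k + 1)`). Over `ZMod p` we have
`(1 + X + X²) ^ (p a + d) = (1 + X^p + X^(2p)) ^ a * (1 + X + X²) ^ d`, and since the second factor
has degree `2d < 2p`, every coefficient of the left side is a product, or a sum of two products,
of coefficients of the factors. For `p = 13` and `n = 13 a + d` this gives `M_n ≡ T(a, a) M_d` when
`d ≤ 10`, `M_n ≡ -T(a, a + 1)` when `d = 11`, and `M_n ≡ T(a, a + 1) + 2 T(a, a)` when `d = 12`.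
The central coefficients `T(n, n)` never vanish mod 13, and the ratio `T(n, n + 1) / T(n, n)`
mod 13 depends only on the lowest nonzero base-13 digit `j` of `n + 1`: it is `0` exactly for
`j = 1` and `-2` exactly for `j = 12`.
-/

open Finset

open Polynomial

-- The recurrence (rather than `coeff`) makes small values evaluable by `decide`.
def trinomialCoeff : ℕ → ℕ → ℕ
  | 0, 0 => 1
  | 0, _ + 1 => 0
  | n + 1, 0 => trinomialCoeff n 0
  | n + 1, 1 => trinomialCoeff n 1 + trinomialCoeff n 0
  | n + 1, m + 2 => trinomialCoeff n (m + 2) + trinomialCoeff n (m + 1) + trinomialCoeff n m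

theorem coeff_one_add_X_add_X_sq_pow_s6 {R : Type*} [Semiring R] (n m : ℕ) :
    ((1 + X + X ^ 2 : R[X]) ^ n).coeff m = trinomialCoeff n m := by
  induction n generalizing m with
  | zero => cases m <;> simp [trinomialCoeff, coeff_one]
  | succ n ih =>
    rw [pow_succ, mul_add, mul_add, mul_one, coeff_add, coeff_add]
    rcases m with _ | _ | m <;> simp [trinomialCoeff, ih, coeff_mul_X_pow', coeff_mul_X]

theorem trinomialCoeff_zero_right (n : ℕ) : trinomialCoeff n 0 = 1 := by
  induction n with
  | zero => rfl
  | succ n ih => simpa [trinomialCoeff] using ih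

theorem trinomialCoeff_one_right (n : ℕ) : trinomialCoeff n 1 = n := by
  induction n with
  | zero => rfl
  | succ n ih => simp [trinomialCoeff, ih, trinomialCoeff_zero_right]

theorem natDegree_one_add_X_add_X_sq_pow_le {R : Type*} [Semiring R] (n : ℕ) :
    ((1 + X + X ^ 2 : R[X]) ^ n).natDegree ≤ 2 * n := by
  rw [mul_comm]
  exact natDegree_pow_le_of_le n (by compute_degree)

section Expand

variable {R : Type*} [CommSemiring R] {p e : ℕ}

theorem Polynomial.coeff_expand_mul_of_natDegree_lt (A B : R[X]) (he : e < p)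
    (hB : B.natDegree < p + e) (c : ℕ) :
    (expand R p A * B).coeff (p * c + e) = A.coeff c * B.coeff e := by
  have hp : 0 < p := by omega
  rw [coeff_mul, Finset.sum_eq_single (p * c, e)]
  · rw [mul_comm p c, coeff_expand_mul hp]
  · rintro ⟨i, m⟩ him hne
    simp only [Finset.HasAntidiagonal.mem_antidiagonal, ne_eq, Prod.mk.injEq] at him hne
    rw [coeff_expand hp]
    split_ifs with hdvd
    · obtain ⟨t, rfl⟩ := hdvd
      rcases lt_trichotomy t c with htc | rfl | htc
      · have : p * t + p ≤ p * c := by simpa [mul_add] using Nat.mul_le_mul_left p htc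
        rw [coeff_eq_zero_of_natDegree_lt (p := B) (by omega), mul_zero]
      · omega
      · have : p * c + p ≤ p * t := by simpa [mul_add] using Nat.mul_le_mul_left p htc
        omega
    · rw [zero_mul]
  · simp

theorem Polynomial.coeff_expand_mul_of_natDegree_lt_add (A B : R[X]) (he : e < p)
    (hB : B.natDegree < 2 * p + e) (c : ℕ) :
    (expand R p A * B).coeff (p * (c + 1) + e) =
      A.coeff (c + 1) * B.coeff e + A.coeff c * B.coeff (p + e) := by
  have hp : 0 < p := by omega
  have hpc : p * (c + 1) = p * c + p := mul_add_one p c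
  rw [coeff_mul, Finset.sum_eq_add (p * (c + 1), e) (p * c, p + e) (by simp; omega)]
  · rw [mul_comm p (c + 1), mul_comm p c, coeff_expand_mul hp, coeff_expand_mul hp]
  · rintro ⟨i, m⟩ him hne
    simp only [Finset.HasAntidiagonal.mem_antidiagonal, ne_eq, Prod.mk.injEq] at him hne
    rw [coeff_expand hp]
    split_ifs with hdvd
    · obtain ⟨t, rfl⟩ := hdvd
      rcases lt_trichotomy t c with htc | rfl | htc
      · have : p * t + p ≤ p * c := by simpa [mul_add] using Nat.mul_le_mul_left p htc
        rw [coeff_eq_zero_of_natDegree_lt (p := B) (by omega), mul_zero]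
      · omega
      · rcases Nat.lt_or_ge (c + 1) t with htc' | htc'
        · have : p * (c + 1) + p ≤ p * t := by simpa [mul_add] using Nat.mul_le_mul_left p htc'
          omega
        · obtain rfl : t = c + 1 := by omega
          omega
    · rw [zero_mul]
  · simp
  · simp; omega

end Expand

section Lucas

variable {p : ℕ} [Fact p.Prime]

theorem pow_mul_add_eq_expand_mul (f : (ZMod p)[X]) (a d : ℕ) :
    f ^ (p * a + d) = expand (ZMod p) p (f ^ a) * f ^ d := by
  rw [pow_add, pow_mul, ← ZMod.expand_card, map_pow]

theorem trinomialCoeff_mul_add {d e : ℕ} (hde : 2 * d < p + e) (he : e < p) (a c : ℕ) :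
    (trinomialCoeff (p * a + d) (p * c + e) : ZMod p) =
      trinomialCoeff a c * trinomialCoeff d e := by
  simp only [← coeff_one_add_X_add_X_sq_pow_s6 (R := ZMod p), pow_mul_add_eq_expand_mul]
  exact coeff_expand_mul_of_natDegree_lt _ _ he
    ((natDegree_one_add_X_add_X_sq_pow_le d).trans_lt hde) c

theorem trinomialCoeff_mul_add_carry {d e : ℕ} (hd : d < p) (he : e < p) (a c : ℕ) :
    (trinomialCoeff (p * a + d) (p * (c + 1) + e) : ZMod p) =
      trinomialCoeff a (c + 1) * trinomialCoeff d e +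
        trinomialCoeff a c * trinomialCoeff d (p + e) := by
  simp only [← coeff_one_add_X_add_X_sq_pow_s6 (R := ZMod p), pow_mul_add_eq_expand_mul]
  exact coeff_expand_mul_of_natDegree_lt_add _ _ he
    ((natDegree_one_add_X_add_X_sq_pow_le d).trans_lt (by omega)) c

end Lucas

theorem Finset.sum_range_succ_eq_sum_range_two_mul {M : Type*} [AddCommMonoid M] {g : ℕ → M}
    {n : ℕ} (hodd : ∀ k, g (2 * k + 1) = 0) (hlarge : ∀ j > n, g j = 0) :
    ∑ j ∈ range (n + 1), g j = ∑ k ∈ range (n + 1), g (2 * k) := by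
  have hpairs : ∀ N, ∑ k ∈ range N, g (2 * k) = ∑ j ∈ range (2 * N), g j := by
    intro N
    induction N with
    | zero => simp
    | succ N ih =>
      rw [sum_range_succ, ih, mul_add_one, sum_range_succ, sum_range_succ, hodd, add_zero]
  rw [hpairs, eventually_constant_sum (fun j hj => hlarge j hj) (by omega : n + 1 ≤ 2 * (n + 1))]

theorem trinomialCoeff_add_two_mul (n s : ℕ) :
    trinomialCoeff n (n + 2 * s) =
      ∑ k ∈ range (n + 1), n.choose (2 * k) * (2 * k).choose (k + s) := by
  have hsplit : (1 + X + X ^ 2 : ℕ[X]) = expand ℕ 2 (1 + X) + X := by simp; ring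
  rw [← Nat.cast_id (trinomialCoeff n _), ← coeff_one_add_X_add_X_sq_pow_s6, hsplit, add_pow,
    finsetSum_coeff]
  calc _ = ∑ j ∈ range (n + 1), n.choose j * (if 2 ∣ j then j.choose (j / 2 + s) else 0) := by
        refine sum_congr rfl fun j hj => ?_
        rw [mem_range] at hj
        rw [← map_pow, ← C_eq_natCast, coeff_mul_C, coeff_mul_X_pow', if_pos (by omega),
          coeff_expand two_pos, coeff_one_add_X_pow, mul_comm]
        rw [show n + 2 * s - (n - j) = j + 2 * s by omega, Nat.add_mul_div_left j s two_pos]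
        simp only [Nat.dvd_add_left (dvd_mul_right 2 s), Nat.cast_id]
    _ = _ := by
        rw [sum_range_succ_eq_sum_range_two_mul (fun k => by rw [if_neg (by omega), mul_zero])
          (fun j hj => by rw [Nat.choose_eq_zero_of_lt hj, zero_mul])]
        simp

theorem catalan_add_choose_eq_centralBinom (k : ℕ) :
    catalan k + (2 * k).choose (k + 1) = k.centralBinom := by
  apply Nat.eq_of_mul_eq_mul_left k.succ_pos
  have hchoose : (2 * k).choose (k + 1) * (k + 1) = k.centralBinom * k := by
    rw [Nat.choose_succ_right_eq, Nat.centralBinom_eq_two_mul_choose, two_mul, Nat.add_sub_cancel]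
  rw [mul_add, succ_mul_catalan_eq_centralBinom, mul_comm, hchoose, Nat.succ_eq_add_one]
  ring

theorem motzkin_add_trinomialCoeff (n : ℕ) :
    motzkin n + trinomialCoeff n (n + 2) = trinomialCoeff n n := by
  have hdiag := trinomialCoeff_add_two_mul n 0
  have hoff := trinomialCoeff_add_two_mul n 1
  simp only [mul_zero, add_zero, mul_one] at hdiag hoff
  rw [hdiag, hoff, motzkin, ← sum_add_distrib]
  refine sum_congr rfl fun k _ => ?_
  rw [← mul_add, catalan_add_choose_eq_centralBinom, Nat.centralBinom_eq_two_mul_choose]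

theorem motzkin_cast_eq {R : Type*} [AddGroupWithOne R] (n : ℕ) :
    (motzkin n : R) = trinomialCoeff n n - trinomialCoeff n (n + 2) := by
  rw [eq_sub_iff_add_eq, ← Nat.cast_add, motzkin_add_trinomialCoeff]

section MotzkinLucas

variable {p : ℕ} [Fact p.Prime]

theorem motzkin_mul_add {d : ℕ} (hd : d + 2 < p) (a : ℕ) :
    (motzkin (p * a + d) : ZMod p) = trinomialCoeff a a * motzkin d := by
  rw [motzkin_cast_eq, motzkin_cast_eq, add_assoc, trinomialCoeff_mul_add (by omega) (by omega),
    trinomialCoeff_mul_add (by omega) hd]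
  ring

theorem motzkin_mul_add_of_add_two_eq {d : ℕ} (hd : d + 2 = p) (a : ℕ) :
    (motzkin (p * a + d) : ZMod p) =
      trinomialCoeff a a * motzkin d - trinomialCoeff a (a + 1) := by
  rw [motzkin_cast_eq, motzkin_cast_eq,
    show p * a + d + 2 = p * (a + 1) + 0 by rw [mul_add_one]; omega,
    trinomialCoeff_mul_add (by omega) (by omega),
    trinomialCoeff_mul_add_carry (d := d) (e := 0) (by omega) (by omega),
    trinomialCoeff_zero_right, show p + 0 = d + 2 by omega]
  push_cast
  ring

theorem motzkin_mul_add_of_add_one_eq {d : ℕ} (hd : d + 1 = p) (a : ℕ) :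
    (motzkin (p * a + d) : ZMod p) =
      trinomialCoeff a a * motzkin d + trinomialCoeff a (a + 1) := by
  have hp : 2 ≤ p := (Fact.out : p.Prime).two_le
  have hd_neg : (d : ZMod p) = -1 := by
    rw [eq_neg_iff_add_eq_zero, ← Nat.cast_add_one, hd, ZMod.natCast_self]
  rw [motzkin_cast_eq, motzkin_cast_eq,
    show p * a + d + 2 = p * (a + 1) + 1 by rw [mul_add_one]; omega,
    trinomialCoeff_mul_add (by omega) (by omega),
    trinomialCoeff_mul_add_carry (d := d) (e := 1) (by omega) (by omega),
    trinomialCoeff_one_right, hd_neg, show p + 1 = d + 2 by omega]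
  ring

end MotzkinLucas

/-- For `0 < j < p`, the lowest nonzero digit of `m` in base `p` is `j`. -/
def HasLastNonzeroDigit (p j m : ℕ) : Prop := ∃ i k : ℕ, m = (p * i + j) * p ^ k

section Digits

variable {p j : ℕ}

theorem hasLastNonzeroDigit_mul_add_iff {a d : ℕ} (hj : j < p) (hd : 0 < d) (hdp : d < p) :
    HasLastNonzeroDigit p j (p * a + d) ↔ d = j := by
  constructor
  · rintro ⟨i, k, h⟩
    cases k with
    | zero =>
      have hmod := congrArg (· % p) h
      simpa [Nat.mul_add_mod, Nat.mod_eq_of_lt hdp, Nat.mod_eq_of_lt hj] using hmod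
    | succ k =>
      have hdvd : p ∣ p * a + d := h ▸ Dvd.dvd.mul_left (dvd_pow_self p k.succ_ne_zero) _
      have := Nat.le_of_dvd hd ((Nat.dvd_add_right (dvd_mul_right p a)).mp hdvd)
      omega
  · rintro rfl
    exact ⟨a, 0, by simp⟩

theorem hasLastNonzeroDigit_mul_iff {a : ℕ} (hj : 0 < j) (hjp : j < p) :
    HasLastNonzeroDigit p j (p * a) ↔ HasLastNonzeroDigit p j a := by
  constructor
  · rintro ⟨i, k, h⟩
    cases k with
    | zero =>
      rw [pow_zero, mul_one] at h
      have hdvd : p ∣ j := (Nat.dvd_add_right (dvd_mul_right p i)).mp (h ▸ dvd_mul_right p a)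
      have := Nat.le_of_dvd hj hdvd
      omega
    | succ k =>
      refine ⟨i, k, Nat.eq_of_mul_eq_mul_left (by omega : 0 < p) ?_⟩
      rw [h, pow_succ]
      ring
  · rintro ⟨i, k, rfl⟩
    exact ⟨i, k + 1, by rw [pow_succ]; ring⟩

theorem exists_eq_mul_pow_succ_iff {a : ℕ} (hp : 0 < p) :
    (∃ i k : ℕ, 1 ≤ k ∧ p * a = (p * i + j) * p ^ k) ↔ HasLastNonzeroDigit p j a := by
  constructor
  · rintro ⟨i, k, hk, h⟩
    obtain ⟨k, rfl⟩ := Nat.exists_eq_add_of_le' hk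
    refine ⟨i, k, Nat.eq_of_mul_eq_mul_left hp ?_⟩
    rw [h, pow_succ]
    ring
  · rintro ⟨i, k, rfl⟩
    exact ⟨i, k + 1, by omega, by rw [pow_succ]; ring⟩

theorem not_exists_eq_mul_pow_succ {m : ℕ} (h : ¬p ∣ m) :
    ¬∃ i k : ℕ, 1 ≤ k ∧ m = (p * i + j) * p ^ k := by
  rintro ⟨i, k, hk, rfl⟩
  exact h (Dvd.dvd.mul_left (dvd_pow_self p (by omega)) _)

end Digits

theorem trinomialCoeff_self_ne_zero_of_forall_lt {p : ℕ} [Fact p.Prime]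
    (h : ∀ d < p, (trinomialCoeff d d : ZMod p) ≠ 0) (n : ℕ) :
    (trinomialCoeff n n : ZMod p) ≠ 0 := by
  have hp : 2 ≤ p := (Fact.out : p.Prime).two_le
  induction n using Nat.strong_induction_on with
  | _ n ih =>
    obtain ⟨a, d, hd, rfl⟩ : ∃ a d, d < p ∧ n = p * a + d :=
      ⟨n / p, n % p, Nat.mod_lt n (by omega), (Nat.div_add_mod n p).symm⟩
    rw [trinomialCoeff_mul_add (by omega) hd]
    refine mul_ne_zero ?_ (h d hd)
    rcases a.eq_zero_or_pos with rfl | ha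
    · exact h 0 (by omega)
    · exact ih a (by nlinarith)

instance fact_prime_thirteen : Fact (Nat.Prime 13) := ⟨by norm_num⟩

theorem trinomialCoeff_self_ne_zero (n : ℕ) : (trinomialCoeff n n : ZMod 13) ≠ 0 :=
  trinomialCoeff_self_ne_zero_of_forall_lt (by decide) n

theorem trinomialCoeff_succ_eq_mul_iff {c : ZMod 13} {j : ℕ} (hj : 0 < j) (hj13 : j < 13)
    (hdigit : ∀ d < 12, (trinomialCoeff d (d + 1) : ZMod 13) = c * trinomialCoeff d d ↔ d + 1 = j)
    (n : ℕ) :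
    (trinomialCoeff n (n + 1) : ZMod 13) = c * trinomialCoeff n n ↔
      HasLastNonzeroDigit 13 j (n + 1) := by
  induction n using Nat.strong_induction_on with
  | _ n ih =>
    obtain ⟨a, d, hd, rfl⟩ : ∃ a d, d < 13 ∧ n = 13 * a + d :=
      ⟨n / 13, n % 13, Nat.mod_lt n (by norm_num), (Nat.div_add_mod n 13).symm⟩
    rw [trinomialCoeff_mul_add (by omega) hd]
    rcases (by omega : d < 12 ∨ d = 12) with hd12 | rfl
    · rw [add_assoc, trinomialCoeff_mul_add (by omega) (by omega), mul_left_comm,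
        mul_right_inj' (trinomialCoeff_self_ne_zero a), hdigit d hd12,
        hasLastNonzeroDigit_mul_add_iff hj13 (by omega) (by omega)]
    · -- `T(12, 12) ≡ 1` and `T(12, 13) ≡ 0`, so the carry into `n + 1` leaves the ratio of `a`.
      rw [show 13 * a + 12 + 1 = 13 * (a + 1) + 0 by ring,
        trinomialCoeff_mul_add_carry (by omega) (by omega)]
      simp only [add_zero]
      rw [hasLastNonzeroDigit_mul_iff hj hj13, ← ih a (by omega)]
      norm_num [show (trinomialCoeff 12 0 : ZMod 13) = 1 by decide,
        show (trinomialCoeff 12 12 : ZMod 13) = 1 by decide,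
        show (trinomialCoeff 12 13 : ZMod 13) = 0 by decide]

theorem trinomialCoeff_succ_eq_zero_iff (n : ℕ) :
    (trinomialCoeff n (n + 1) : ZMod 13) = 0 ↔ HasLastNonzeroDigit 13 1 (n + 1) := by
  simpa using trinomialCoeff_succ_eq_mul_iff (c := 0) one_pos (by norm_num) (by decide) n

theorem trinomialCoeff_succ_add_two_mul_eq_zero_iff (n : ℕ) :
    (trinomialCoeff n (n + 1) : ZMod 13) + 2 * trinomialCoeff n n = 0 ↔
      HasLastNonzeroDigit 13 12 (n + 1) := by
  rw [← eq_neg_iff_add_eq_zero, ← neg_mul]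
  exact trinomialCoeff_succ_eq_mul_iff (by norm_num) (by norm_num) (by decide) n

theorem motzkin_cast_ne_zero_of_le_ten {d : ℕ} (hd : d ≤ 10) : (motzkin d : ZMod 13) ≠ 0 := by
  rw [motzkin_cast_eq]
  interval_cases d <;> decide

theorem motzkin_eleven_cast : (motzkin 11 : ZMod 13) = 0 := by
  rw [motzkin_cast_eq]
  decide

theorem motzkin_twelve_cast : (motzkin 12 : ZMod 13) = 2 := by
  rw [motzkin_cast_eq]
  decide

theorem motzkin_mod_thirteen (n : ℕ) :
    13 ∣ motzkin n ↔
      ∃ i k : ℕ, 1 ≤ k ∧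
        (n + 2 = (13 * i + 1) * 13 ^ k ∨
         n + 1 = (13 * i + 12) * 13 ^ k) := by
  obtain ⟨a, d, hd, rfl⟩ : ∃ a d, d < 13 ∧ n = 13 * a + d :=
    ⟨n / 13, n % 13, Nat.mod_lt n (by norm_num), (Nat.div_add_mod n 13).symm⟩
  rw [← ZMod.natCast_eq_zero_iff]
  simp only [and_or_left, exists_or]
  rcases (by omega : d ≤ 10 ∨ d = 11 ∨ d = 12) with hd | rfl | rfl
  · rw [motzkin_mul_add (by omega)]
    exact iff_of_false
      (mul_ne_zero (trinomialCoeff_self_ne_zero a) (motzkin_cast_ne_zero_of_le_ten hd))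
      (not_or.2 ⟨not_exists_eq_mul_pow_succ (by omega), not_exists_eq_mul_pow_succ (by omega)⟩)
  · rw [motzkin_mul_add_of_add_two_eq (p := 13) (d := 11) rfl, motzkin_eleven_cast, mul_zero,
      zero_sub, neg_eq_zero, trinomialCoeff_succ_eq_zero_iff,
      show 13 * a + 11 + 2 = 13 * (a + 1) by ring,
      exists_eq_mul_pow_succ_iff (by norm_num), or_iff_left (not_exists_eq_mul_pow_succ (by omega))]
  · rw [motzkin_mul_add_of_add_one_eq (p := 13) (d := 12) rfl, motzkin_twelve_cast, add_comm,
      mul_comm, trinomialCoeff_succ_add_two_mul_eq_zero_iff,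
      show 13 * a + 12 + 1 = 13 * (a + 1) by ring, exists_eq_mul_pow_succ_iff (by norm_num),
      or_iff_right (not_exists_eq_mul_pow_succ (by omega))]
end

section
/- For every integer k ≥ 1, the Motzkin number M_{19^k − 1} is congruent to 2 modulo 19. -/
open Finset

namespace MotzkinAux

instance : Fact (Nat.Prime 19) := ⟨by norm_num⟩

lemma lucas19 (n k : ℕ) : ((n.choose k : ZMod 19)) =
    (n % 19).choose (k % 19) * (n / 19).choose (k / 19) := by
  have h := (ZMod.intCast_eq_intCast_iff _ _ _).mpr
    (@Choose.choose_modEq_choose_mod_mul_choose_div n k 19 _)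
  push_cast at h
  exact_mod_cast h

lemma cat_eq (n : ℕ) : catalan n + (2*n).choose (n+1) = (2*n).choose n := by
  have h1 : (n+1) * catalan n = n.centralBinom := succ_mul_catalan_eq_centralBinom n
  have h2 : (2*n).choose (n+1) * (n+1) = (2*n).choose n * n := by
    have := Nat.choose_succ_right_eq (2*n) n
    simpa [two_mul] using this
  have h3 : ((2*n).choose n) = n.centralBinom := rfl
  nlinarith [h1, h2, h3]

lemma cat_cast (n : ℕ) :
    (catalan n : ZMod 19) = ((2*n).choose n : ZMod 19) - ((2*n).choose (n+1) : ZMod 19) := by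
  have h := cat_eq n
  have : ((catalan n + (2*n).choose (n+1) : ℕ) : ZMod 19) = (((2*n).choose n : ℕ) : ZMod 19) := by
    rw [h]
  push_cast at this
  exact eq_sub_of_add_eq this

lemma fact18 : ∀ r : Fin 19, ((Nat.choose 18 r : ZMod 19)) = (-1)^(r:ℕ) := by decide

lemma factB : (∑ r ∈ range 10, ((2*r).choose r : ZMod 19)) = 1 := by decide

lemma factC : (∑ r ∈ range 10, (catalan r : ZMod 19)) = 2 := by
  simp only [cat_cast]; decide

/-- Central binomial coefficient digit lemma, low digit. -/
lemma cb_low (q r : ℕ) (hr : r ≤ 9) :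
    (((2*(19*q+r)).choose (19*q+r) : ZMod 19)) = ((2*q).choose q : ZMod 19) * ((2*r).choose r) := by
  rw [lucas19]
  have h1 : (2*(19*q+r)) % 19 = 2*r := by omega
  have h2 : (2*(19*q+r)) / 19 = 2*q := by omega
  have h3 : (19*q+r) % 19 = r := by omega
  have h4 : (19*q+r) / 19 = q := by omega
  rw [h1, h2, h3, h4, mul_comm]

/-- Central binomial coefficient digit lemma, high digit. -/
lemma cb_high (q r : ℕ) (hr1 : 10 ≤ r) (hr2 : r ≤ 18) :
    (((2*(19*q+r)).choose (19*q+r) : ZMod 19)) = 0 := by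
  rw [lucas19]
  have h1 : (2*(19*q+r)) % 19 = 2*r - 19 := by omega
  have h3 : (19*q+r) % 19 = r := by omega
  rw [h1, h3, Nat.choose_eq_zero_of_lt (by omega)]
  simp

lemma cat_low (q r : ℕ) (hr : r ≤ 9) :
    ((catalan (19*q+r) : ZMod 19)) = ((2*q).choose q : ZMod 19) * (catalan r) := by
  rw [cat_cast, cb_low q r hr, cat_cast r]
  have h : (((2*(19*q+r)).choose (19*q+r+1) : ZMod 19))
      = ((2*q).choose q : ZMod 19) * ((2*r).choose (r+1)) := by
    rw [lucas19]
    have h1 : (2*(19*q+r)) % 19 = 2*r := by omega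
    have h2 : (2*(19*q+r)) / 19 = 2*q := by omega
    have h3 : (19*q+r+1) % 19 = r+1 := by omega
    have h4 : (19*q+r+1) / 19 = q := by omega
    rw [h1, h2, h3, h4, mul_comm]
  rw [h]; ring

lemma cat_mid (q r : ℕ) (hr1 : 10 ≤ r) (hr2 : r ≤ 17) :
    ((catalan (19*q+r) : ZMod 19)) = 0 := by
  rw [cat_cast, cb_high q r hr1 (by omega)]
  have h : (((2*(19*q+r)).choose (19*q+r+1) : ZMod 19)) = 0 := by
    rw [lucas19]
    have h1 : (2*(19*q+r)) % 19 = 2*r - 19 := by omega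
    have h3 : (19*q+r+1) % 19 = r+1 := by omega
    rw [h1, h3, Nat.choose_eq_zero_of_lt (by omega)]
    simp
  rw [h]; ring

lemma cat_top (q : ℕ) :
    ((catalan (19*q+18) : ZMod 19)) = -((2*q+1).choose (q+1) : ZMod 19) := by
  rw [cat_cast, cb_high q 18 (by norm_num) (by norm_num)]
  have h : (((2*(19*q+18)).choose (19*q+18+1) : ZMod 19))
      = ((2*q+1).choose (q+1) : ZMod 19) := by
    rw [lucas19]
    have h1 : (2*(19*q+18)) % 19 = 17 := by omega
    have h2 : (2*(19*q+18)) / 19 = 2*q+1 := by omega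
    have h3 : (19*q+18+1) % 19 = 0 := by omega
    have h4 : (19*q+18+1) / 19 = q+1 := by omega
    rw [h1, h2, h3, h4]
    simp
  rw [h]; ring

/-- Block decomposition of sums. -/
lemma sum_blocks (f : ℕ → ZMod 19) (Q : ℕ) :
    ∑ n ∈ range (19*Q), f n = ∑ q ∈ range Q, ∑ r ∈ range 19, f (19*q + r) := by
  induction Q with
  | zero => simp
  | succ Q ih =>
    rw [Nat.mul_succ, Finset.sum_range_add, ih,
      Finset.sum_range_succ (fun q => ∑ r ∈ range 19, f (19 * q + r)) Q]

def N : ℕ → ℕ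
  | 0 => 0
  | k + 1 => 19 * N k + 9

lemma N_spec (k : ℕ) : 2 * N k + 1 = 19 ^ k := by
  induction k with
  | zero => simp [N]
  | succ k ih => rw [N, pow_succ]; omega

/-- Sum of central binomial coefficients. -/
lemma sumA (k : ℕ) : (∑ n ∈ range (N k + 1), ((2*n).choose n : ZMod 19)) = 1 := by
  induction k with
  | zero => simp [N]
  | succ k ih =>
    have hN : N (k+1) + 1 = 19 * N k + 10 := by simp [N]
    rw [hN, Finset.sum_range_add, sum_blocks]
    have hinner : ∀ q, (∑ r ∈ range 19, (((2*(19*q+r)).choose (19*q+r) : ZMod 19)))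
        = ((2*q).choose q : ZMod 19) := by
      intro q
      rw [show (range 19 : Finset ℕ) = range (10 + 9) from rfl, Finset.sum_range_add]
      have h2 : (∑ r ∈ range 9, (((2*(19*q+(10+r))).choose (19*q+(10+r)) : ZMod 19))) = 0 :=
        Finset.sum_eq_zero fun r hr => cb_high q (10+r) (by omega)
          (by have := mem_range.mp hr; omega)
      have h1 : (∑ r ∈ range 10, (((2*(19*q+r)).choose (19*q+r) : ZMod 19)))
          = ((2*q).choose q : ZMod 19) := by
        rw [Finset.sum_congr rfl (fun r hr => cb_low q r (by have := mem_range.mp hr; omega)),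
          ← Finset.mul_sum, factB, mul_one]
      rw [h1, h2, add_zero]
    have htail : (∑ r ∈ range 10, (((2*(19*(N k)+r)).choose (19*(N k)+r) : ZMod 19)))
        = ((2*(N k)).choose (N k) : ZMod 19) := by
      rw [Finset.sum_congr rfl (fun r hr => cb_low (N k) r (by have := mem_range.mp hr; omega)),
        ← Finset.mul_sum, factB, mul_one]
    calc (∑ q ∈ range (N k), ∑ r ∈ range 19, (((2*(19*q+r)).choose (19*q+r) : ZMod 19)))
          + ∑ r ∈ range 10, (((2*(19*(N k)+r)).choose (19*(N k)+r) : ZMod 19))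
        = (∑ q ∈ range (N k), ((2*q).choose q : ZMod 19)) + ((2*(N k)).choose (N k) : ZMod 19) := by
          rw [Finset.sum_congr rfl (fun q _ => hinner q), htail]
      _ = 1 := by rw [← Finset.sum_range_succ]; exact ih

lemma sumS (k : ℕ) : (∑ n ∈ range (N (k+1) + 1), (catalan n : ZMod 19)) = 2 := by
  have hN : N (k+1) + 1 = 19 * N k + 10 := by simp [N]
  rw [hN, Finset.sum_range_add, sum_blocks]
  have hA := sumA k
  -- tail
  have htail : (∑ r ∈ range 10, ((catalan (19*(N k)+r) : ZMod 19)))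
      = 2 * ((2*(N k)).choose (N k) : ZMod 19) := by
    rw [Finset.sum_congr rfl (fun r hr => cat_low (N k) r (by have := mem_range.mp hr; omega)),
      ← Finset.mul_sum, factC]
    ring
  -- inner
  have hinner : ∀ q, (∑ r ∈ range 19, ((catalan (19*q+r) : ZMod 19)))
      = 2 * ((2*q).choose q : ZMod 19) - ((2*q+1).choose (q+1) : ZMod 19) := by
    intro q
    rw [Finset.sum_range_succ]
    rw [show (range 18 : Finset ℕ) = range (10 + 8) from rfl, Finset.sum_range_add]
    have h2 : (∑ r ∈ range 8, ((catalan (19*q+(10+r)) : ZMod 19))) = 0 :=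
      Finset.sum_eq_zero fun r hr => cat_mid q (10+r) (by omega)
        (by have := mem_range.mp hr; omega)
    have h1 : (∑ r ∈ range 10, ((catalan (19*q+r) : ZMod 19)))
        = 2 * ((2*q).choose q : ZMod 19) := by
      rw [Finset.sum_congr rfl (fun r hr => cat_low q r (by have := mem_range.mp hr; omega)),
        ← Finset.mul_sum, factC]
      ring
    rw [h1, h2, cat_top q]
    ring
  rw [Finset.sum_congr rfl (fun q _ => hinner q), htail, Finset.sum_sub_distrib,
    ← Finset.mul_sum]
  -- T = ∑ C(2q+1, q+1) over q < N k is zero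
  have hsplit : (∑ q ∈ range (N k), ((2*q).choose q : ZMod 19))
      = 1 - ((2*(N k)).choose (N k) : ZMod 19) := by
    have := Finset.sum_range_succ (fun q => ((2*q).choose q : ZMod 19)) (N k)
    rw [hA] at this
    linear_combination -this
  have hT : (∑ q ∈ range (N k), (((2*q+1).choose (q+1) : ZMod 19))) = 0 := by
    have hdouble : ∀ q : ℕ, (2*(q+1)).choose (q+1) = 2 * ((2*q+1).choose (q+1)) := by
      intro q
      have hsymm : (2*q+1).choose q = (2*q+1).choose (q+1) := by
        have h := Nat.choose_symm (show q+1 ≤ 2*q+1 by omega)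
        rw [show 2*q+1-(q+1) = q from by omega] at h
        exact h
      rw [show 2*(q+1) = (2*q+1)+1 from by omega, Nat.choose_succ_succ, hsymm]
      simp only [Nat.succ_eq_add_one]
      omega
    have h2T : (2 : ZMod 19) * (∑ q ∈ range (N k), (((2*q+1).choose (q+1) : ZMod 19)))
        = (∑ q ∈ range (N k), (((2*(q+1)).choose (q+1) : ZMod 19))) := by
      rw [Finset.mul_sum]
      refine Finset.sum_congr rfl fun q _ => ?_
      rw [hdouble q]
      push_cast
      ring
    have hshift : (∑ q ∈ range (N k), (((2*(q+1)).choose (q+1) : ZMod 19))) = 0 := by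
      have := Finset.sum_range_succ' (fun q => ((2*q).choose q : ZMod 19)) (N k)
      rw [hA] at this
      have h00 : ((2*0).choose 0 : ZMod 19) = 1 := by norm_num
      rw [h00] at this
      linear_combination -this
    have := h2T.trans hshift
    rcases mul_eq_zero.mp this with h | h
    · exact absurd h (by decide)
    · exact h
  rw [hT, hsplit]
  ring

lemma neg_one_pow_par (a b : ℕ) (h : a % 2 = b % 2) :
    ((-1 : ZMod 19))^a = (-1)^b := by
  rcases Nat.even_or_odd a with ha | ha
  · have ha' := Nat.even_iff.mp ha
    rw [ha.neg_one_pow, (Nat.even_iff.mpr (by omega : b % 2 = 0)).neg_one_pow]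
  · have ha' := Nat.odd_iff.mp ha
    rw [ha.neg_one_pow, (Nat.odd_iff.mpr (by omega : b % 2 = 1)).neg_one_pow]

/-- Lucas gives `(-1)^m` for `choose (19^k - 1) m`. -/
lemma choose_N (k m : ℕ) (hm : m ≤ 2 * N k) :
    (((2 * N k).choose m : ZMod 19)) = (-1)^m := by
  induction k generalizing m with
  | zero => simp [N] at hm ⊢; simp [hm]
  | succ k ih =>
    rw [lucas19]
    have h1 : (2 * N (k+1)) % 19 = 18 := by simp [N]; omega
    have h2 : (2 * N (k+1)) / 19 = 2 * N k := by simp [N]; omega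
    have h3 : m / 19 ≤ 2 * N k := by
      have : 2 * N (k+1) = 19 * (2 * N k) + 18 := by simp [N]; ring
      omega
    rw [h1, h2, ih _ h3]
    have h4 : ((Nat.choose 18 (m % 19) : ZMod 19)) = (-1)^(m % 19) :=
      fact18 ⟨m % 19, by omega⟩
    rw [h4, ← pow_add]
    exact neg_one_pow_par _ _ (by omega)

lemma motzkin_cast (k : ℕ) (hk : 1 ≤ k) :
    ((motzkin (2 * N k) : ZMod 19)) = 2 := by
  obtain ⟨m, rfl⟩ : ∃ m, k = m + 1 := ⟨k - 1, by omega⟩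
  have key : ((motzkin (2 * N (m+1)) : ZMod 19))
      = ∑ n ∈ range (N (m+1) + 1), (catalan n : ZMod 19) := by
    rw [motzkin]
    push_cast
    have hsub : range (N (m+1) + 1) ⊆ range (2 * N (m+1) + 1) :=
      Finset.range_subset_range.mpr (by omega)
    have hz : ∀ j ∈ range (2 * N (m+1) + 1), j ∉ range (N (m+1) + 1) →
        (((2 * N (m+1)).choose (2*j) : ZMod 19)) * (catalan j : ZMod 19) = 0 := by
      intro j hj hj'
      have h2 : N (m+1) + 1 ≤ j := by
        by_contra h
        exact hj' (Finset.mem_range.mpr (by omega))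
      rw [Nat.choose_eq_zero_of_lt (by omega), Nat.cast_zero, zero_mul]
    rw [← Finset.sum_subset hsub hz]
    refine Finset.sum_congr rfl fun j hj => ?_
    have hj' : j ≤ N (m+1) := by have := Finset.mem_range.mp hj; omega
    rw [choose_N (m+1) (2*j) (by omega), pow_mul]
    norm_num
  rw [key, sumS]

end MotzkinAux

theorem motzkin_19pow_sub_one (k : ℕ) (hk : 1 ≤ k) :
    motzkin (19 ^ k - 1) % 19 = 2 := by
  have hN := MotzkinAux.N_spec k
  have h : 19 ^ k - 1 = 2 * MotzkinAux.N k := by omega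
  rw [h]
  have := MotzkinAux.motzkin_cast k hk
  have h2 : ((motzkin (2 * MotzkinAux.N k) : ZMod 19)) = ((2 : ℕ) : ZMod 19) := by
    rw [this]; norm_num
  have h3 : motzkin (2 * MotzkinAux.N k) % 19 = 2 % 19 :=
    (ZMod.natCast_eq_natCast_iff _ _ _).mp h2
  omega
end

section
/- If the base-17 representation of n contains at least two digits belonging to the set {5, 11}, then the Motzkin number M_n is divisible by 17. -/
/-!
Let `T n` be the central trinomial coefficient, the coefficient of `X ^ n` in `(1 + X + X ^ 2) ^ n`.
Writing both `T n` and `M n` as sums of `n.choose (2 * k)` against `k.centralBinom` resp.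
`catalan k`, Pascal's rule and `4 C(2k, k) = C(2k+2, k+1) + 2 Cat k` give
`T (n + 2) + 2 M n = 2 T (n + 1) + 3 T n`.
Modulo a prime `p` we have `(1 + X + X ^ 2) ^ p = 1 + X ^ p + X ^ (2 p)`, whence the Lucas-type
congruence `T (p q + r) ≡ T q * T r` for `r < p`; so `p ∣ T n` as soon as some base-`p` digit `d`
of `n` has `p ∣ T d`. For `p = 17` this holds for `d = 5, 11` (`T 5 = 3 * 17`,
`T 11 = 1509 * 17`). If `n` has two such digits, adding `c ≤ 2` to `n` destroys at most one of
them, so `17` divides `T n`, `T (n + 1)`, `T (n + 2)`, hence `2 M n`, hence `M n`.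
-/

open Finset Polynomial

def evenChooseSum (g : ℕ → ℕ) (n : ℕ) : ℕ := ∑ k ∈ range (n + 1), n.choose (2 * k) * g k

def oddChooseSum (g : ℕ → ℕ) (n : ℕ) : ℕ := ∑ k ∈ range (n + 1), n.choose (2 * k + 1) * g k

theorem evenChooseSum_eq_sum_add (g : ℕ → ℕ) (n : ℕ) :
    evenChooseSum g n = ∑ k ∈ range n, n.choose (2 * k + 2) * g (k + 1) + g 0 := by
  simp [evenChooseSum, sum_range_succ', Nat.mul_succ]

theorem evenChooseSum_succ (g : ℕ → ℕ) (n : ℕ) :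
    evenChooseSum g (n + 1) = evenChooseSum g n + oddChooseSum (fun k => g (k + 1)) n := by
  rw [evenChooseSum_eq_sum_add, evenChooseSum_eq_sum_add g n, oddChooseSum]
  simp only [Nat.choose_succ_succ', add_mul, sum_add_distrib]
  rw [sum_range_succ (fun k => n.choose (2 * k + 2) * g (k + 1)) n,
    Nat.choose_eq_zero_of_lt (by omega : n < 2 * n + 2)]
  ring

theorem oddChooseSum_succ (g : ℕ → ℕ) (n : ℕ) :
    oddChooseSum g (n + 1) = oddChooseSum g n + evenChooseSum g n := by
  rw [oddChooseSum, sum_range_succ, Nat.choose_eq_zero_of_lt (by omega : n + 1 < 2 * (n + 1) + 1)]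
  simp only [Nat.choose_succ_succ', add_mul, sum_add_distrib, zero_mul, add_zero, oddChooseSum,
    evenChooseSum]
  ring

noncomputable def centralTrinomial (n : ℕ) : ℕ := ((1 + X + X ^ 2 : ℕ[X]) ^ n).coeff n

theorem choose_two_mul_mul_centralBinom (n k : ℕ) :
    n.choose (2 * k) * k.centralBinom = n.choose k * (n - k).choose k := by
  rw [Nat.centralBinom_eq_two_mul_choose, Nat.choose_mul (by omega)]
  congr 2
  omega

theorem centralTrinomial_eq_sum_choose_mul_choose (n : ℕ) :
    centralTrinomial n = ∑ k ∈ range (n + 1), n.choose k * (n - k).choose k := by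
  rw [centralTrinomial, show (1 + X + X ^ 2 : ℕ[X]) = 1 + X * (1 + X) by ring, add_pow,
    finsetSum_coeff]
  refine sum_congr rfl fun k hk => ?_
  rw [one_pow, one_mul, coeff_mul_natCast, mul_pow, coeff_X_pow_mul', if_pos (by omega),
    coeff_one_add_X_pow, Nat.sub_sub_self (by simpa [Nat.lt_succ_iff] using hk), mul_comm,
    Nat.cast_id, Nat.cast_id]

theorem centralTrinomial_eq_evenChooseSum (n : ℕ) :
    centralTrinomial n = evenChooseSum Nat.centralBinom n := by
  simp only [centralTrinomial_eq_sum_choose_mul_choose, evenChooseSum,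
    choose_two_mul_mul_centralBinom]

theorem four_mul_centralBinom (k : ℕ) :
    4 * k.centralBinom = (k + 1).centralBinom + 2 * catalan k := by
  apply Nat.eq_of_mul_eq_mul_left k.succ_pos
  have := Nat.succ_mul_centralBinom_succ k
  have := succ_mul_catalan_eq_centralBinom k
  grind

theorem centralTrinomial_add_two_add_two_mul_motzkin (n : ℕ) :
    centralTrinomial (n + 2) + 2 * motzkin n =
      2 * centralTrinomial (n + 1) + 3 * centralTrinomial n := by
  have hshift : evenChooseSum (fun k => (k + 1).centralBinom) n + 2 * motzkin n =
      4 * evenChooseSum Nat.centralBinom n := by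
    rw [evenChooseSum, evenChooseSum, motzkin, mul_sum, mul_sum, ← sum_add_distrib]
    refine sum_congr rfl fun k _ => ?_
    rw [mul_left_comm 4, four_mul_centralBinom]
    ring
  simp only [centralTrinomial_eq_evenChooseSum, evenChooseSum_succ, oddChooseSum_succ]
  omega

theorem coeff_pow_mul_add_eq_mul {p : ℕ} [Fact p.Prime] {f : (ZMod p)[X]} (hf : f.natDegree ≤ 2)
    (q : ℕ) {r : ℕ} (hr : r < p) :
    (f ^ (p * q + r)).coeff (p * q + r) = (f ^ q).coeff q * (f ^ r).coeff r := by
  have hp : 0 < p := Fact.out (p := p.Prime) |>.pos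
  rw [pow_add, pow_mul', ← ZMod.expand_card, coeff_mul,
    sum_eq_single (p * q, r) _ (by simp), coeff_expand_mul' hp]
  rintro ⟨i, j⟩ hij hne
  rw [HasAntidiagonal.mem_antidiagonal] at hij
  dsimp only at hij ⊢
  by_cases hdvd : p ∣ i
  · obtain ⟨m, rfl⟩ := hdvd
    have hj : (f ^ r).natDegree < j := by
      have : m < q := by
        rcases lt_trichotomy m q with h | rfl | h
        · exact h
        · simp only [ne_eq, Prod.mk.injEq, true_and] at hne
          omega
        · nlinarith
      calc (f ^ r).natDegree ≤ r * 2 := natDegree_pow_le_of_le r hf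
        _ < j := by nlinarith
    rw [coeff_eq_zero_of_natDegree_lt hj, mul_zero]
  · rw [coeff_expand hp, if_neg hdvd, zero_mul]

theorem cast_centralTrinomial (R : Type*) [CommSemiring R] (n : ℕ) :
    (centralTrinomial n : R) = ((1 + X + X ^ 2 : R[X]) ^ n).coeff n := by
  have : (1 + X + X ^ 2 : R[X]) ^ n = ((1 + X + X ^ 2 : ℕ[X]) ^ n).map (Nat.castRingHom R) := by
    simp
  rw [this, coeff_map]
  rfl

theorem cast_centralTrinomial_mul_add {p : ℕ} [Fact p.Prime] (q : ℕ) {r : ℕ} (hr : r < p) :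
    (centralTrinomial (p * q + r) : ZMod p) = centralTrinomial q * centralTrinomial r := by
  simp only [cast_centralTrinomial]
  exact coeff_pow_mul_add_eq_mul (by compute_degree!) q hr

theorem dvd_centralTrinomial_of_mem_digits {p : ℕ} [Fact p.Prime] {d n : ℕ}
    (hd : d ∈ p.digits n) (hpd : p ∣ centralTrinomial d) : p ∣ centralTrinomial n := by
  have hp : 1 < p := Fact.out (p := p.Prime) |>.one_lt
  induction n using Nat.strong_induction_on with
  | _ n ih =>
  rcases n.eq_zero_or_pos with rfl | hn
  · simp at hd
  rw [Nat.digits_def' hp hn, List.mem_cons] at hd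
  rw [← ZMod.natCast_eq_zero_iff] at hpd ⊢
  rw [← Nat.div_add_mod n p, cast_centralTrinomial_mul_add _ (Nat.mod_lt n (by omega))]
  rcases hd with rfl | hd
  · rw [hpd, mul_zero]
  · rw [(ZMod.natCast_eq_zero_iff _ _).mpr (ih _ (Nat.div_lt_self hn hp) hd), zero_mul]

theorem exists_mem_digits_add_of_two_le_countP {b : ℕ} (hb : 1 < b) {P : ℕ → Bool} (n : ℕ)
    {c : ℕ} (hP : ∀ d, P d → d + c < b) (h : 2 ≤ (b.digits n).countP P) :
    ∃ d ∈ b.digits (n + c), P d := by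
  induction n using Nat.strong_induction_on generalizing c with
  | _ n ih =>
  obtain ⟨d₀, -, hPd₀⟩ := List.countP_pos_iff.mp (show 0 < (b.digits n).countP P by omega)
  have hc : c < b := by have := hP d₀ hPd₀; omega
  rcases n.eq_zero_or_pos with rfl | hn
  · simp at h
  rw [Nat.digits_def' hb hn, List.countP_cons] at h
  rw [Nat.digits_def' hb (by omega)]
  have hmod : n % b < b := Nat.mod_lt n (by omega)
  have hsplit : (n + c) / b = n / b + (n % b + c) / b := by
    rw [add_comm (n / b), ← Nat.add_mul_div_left _ _ (by omega : 0 < b)]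
    congr 1
    have := Nat.mod_add_div n b
    omega
  by_cases hcarry : n % b + c < b
  · obtain ⟨d, hd, hPd⟩ := List.countP_pos_iff.mp
      (show 0 < (b.digits (n / b)).countP P by split at h <;> omega)
    rw [hsplit, Nat.div_eq_of_lt hcarry, add_zero]
    exact ⟨d, List.mem_cons_of_mem _ hd, hPd⟩
  · -- the overflowing lowest digit is not special, and the higher digits receive a carry of `1`
    have hlow : P (n % b) = false := by
      by_contra hPd
      exact hcarry (hP _ (by simpa using hPd))
    obtain ⟨d, hd, hPd⟩ := ih (n / b) (Nat.div_lt_self hn hb) (c := 1)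
      (fun d hd => by have := hP d hd; omega) (by simpa [hlow] using h)
    have hcarry_one : (n % b + c) / b = 1 := Nat.div_eq_of_lt_le (by omega) (by omega)
    rw [hsplit, hcarry_one]
    exact ⟨d, List.mem_cons_of_mem _ hd, hPd⟩

theorem seventeen_dvd_centralTrinomial_of_eq_five_or_eleven {d : ℕ} (hd : d = 5 ∨ d = 11) :
    17 ∣ centralTrinomial d := by
  rcases hd with rfl | rfl <;> rw [centralTrinomial_eq_evenChooseSum] <;> decide

theorem motzkin_two_special_base17 (n : ℕ)
    (h : 2 ≤ (Nat.digits 17 n).countP (fun d => decide (d = 5 ∨ d = 11))) :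
    17 ∣ motzkin n := by
  have : Fact (Nat.Prime 17) := ⟨by norm_num⟩
  have hT : ∀ c ≤ 2, 17 ∣ centralTrinomial (n + c) := fun c hc => by
    obtain ⟨d, hd, hspecial⟩ := exists_mem_digits_add_of_two_le_countP (c := c) (by norm_num) n
      (fun d hd => by simp at hd; omega) h
    exact dvd_centralTrinomial_of_mem_digits hd
      (seventeen_dvd_centralTrinomial_of_eq_five_or_eleven (by simpa using hspecial))
  have h2M : 17 ∣ 2 * motzkin n := by
    refine (Nat.dvd_add_right (hT 2 le_rfl)).mp ?_
    rw [centralTrinomial_add_two_add_two_mul_motzkin]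
    exact dvd_add (dvd_mul_of_dvd_right (hT 1 (by norm_num)) 2)
      (dvd_mul_of_dvd_right (hT 0 (by norm_num)) 3)
  exact Nat.Coprime.dvd_of_dvd_mul_left (by norm_num) h2M
end
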